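/- arXiv:2403.00619 — 8 statements merged into one kernel-verified Lean document; each statement's English description precedes it below -/
import Mathlib

section
/- (Maharam's recurrence theorem) Let T be a measure preserving transformation of a measure space (X, F, m). If there is a measurable set A of finite measure with X = ∪_{k≥1} T^{-k} A up to an m-null set, then T is conservative: every measurable subset B of X is recurrent, i.e. τ_B < ∞ m-a.e. on B. -/
/-!
If no point of `s` ever returns to `s`, the preimages `f^[j] ⁻¹' s` are pairwise disjoint, and
pulling everything back to a common time `N` gives `∑ n, μ (s ∩ f^[n] ⁻¹' A) ≤ μ A < ∞`. By
Borel–Cantelli a.e. point of `s` then visits `A` only finitely often, while the covering hypothesis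
makes a.e. orbit visit `A` infinitely often; hence `μ s = 0`, i.e. `f` is conservative, and
Poincaré recurrence for conservative maps gives the claim.
-/

open MeasureTheory Set Filter Function
open scoped ENNReal

theorem pairwise_disjoint_iterate_preimage_of_forall_not_return {α : Type*} {f : α → α}
    {s : Set α} (hs : ∀ x ∈ s, ∀ n ≠ 0, f^[n] x ∉ s) :
    Pairwise (Disjoint on fun n => f^[n] ⁻¹' s) := by
  refine (pairwise_disjoint_on _).2 fun i j hij => disjoint_left.2 fun x hxi hxj => ?_
  refine hs _ hxi (j - i) (by omega) ?_
  rwa [← iterate_add_apply, Nat.sub_add_cancel hij.le]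

namespace MeasureTheory

variable {α : Type*} [MeasurableSpace α] {μ : Measure α} {f : α → α} {s A : Set α}

theorem MeasurePreserving.tsum_measure_inter_iterate_preimage_le (hf : MeasurePreserving f μ μ)
    (hs : MeasurableSet s) (hret : ∀ x ∈ s, ∀ n ≠ 0, f^[n] x ∉ s) (hA : MeasurableSet A) :
    ∑' n, μ (s ∩ f^[n] ⁻¹' A) ≤ μ A := by
  refine ENNReal.tsum_le_of_sum_range_le fun N => ?_
  have hdisj := pairwise_disjoint_iterate_preimage_of_forall_not_return hret
  calc ∑ n ∈ Finset.range N, μ (s ∩ f^[n] ⁻¹' A)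
      = ∑ n ∈ Finset.range N, μ (f^[N - n] ⁻¹' s ∩ f^[N] ⁻¹' A) := by
        refine Finset.sum_congr rfl fun n hn => ?_
        have hmeas : MeasurableSet (s ∩ f^[n] ⁻¹' A) := hs.inter ((hf.iterate n).measurable hA)
        rw [← (hf.iterate (N - n)).measure_preimage hmeas.nullMeasurableSet, preimage_inter,
          ← preimage_comp, ← iterate_add, Nat.add_sub_cancel' (Finset.mem_range.1 hn).le]
    _ = μ (⋃ n ∈ Finset.range N, f^[N - n] ⁻¹' s ∩ f^[N] ⁻¹' A) := by
        refine (measure_biUnion_finset (fun i hi j hj hij => ?_) fun n _ =>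
          ((hf.iterate _).measurable hs).inter ((hf.iterate N).measurable hA)).symm
        have hi := Finset.mem_range.1 hi
        have hj := Finset.mem_range.1 hj
        exact (hdisj (show N - i ≠ N - j by omega)).mono inter_subset_left inter_subset_left
    _ ≤ μ (f^[N] ⁻¹' A) := measure_mono (iUnion₂_subset fun _ _ => inter_subset_right)
    _ = μ A := (hf.iterate N).measure_preimage hA.nullMeasurableSet

theorem Measure.QuasiMeasurePreserving.ae_frequently_iterate_mem
    (hf : QuasiMeasurePreserving f μ μ) (h : ∀ᵐ x ∂μ, ∃ n, f^[n] x ∈ A) :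
    ∀ᵐ x ∂μ, ∃ᶠ n in atTop, f^[n] x ∈ A := by
  filter_upwards [ae_all_iff.2 fun j => (hf.iterate j).ae h] with x hx
  refine frequently_atTop.2 fun j => ?_
  obtain ⟨n, hn⟩ := hx j
  exact ⟨n + j, Nat.le_add_left j n, by rwa [iterate_add_apply]⟩

theorem MeasurePreserving.conservative_of_ae_exists_iterate_mem (hf : MeasurePreserving f μ μ)
    (hA : MeasurableSet A) (hA' : μ A ≠ ∞) (hcov : ∀ᵐ x ∂μ, ∃ n, f^[n] x ∈ A) :
    Conservative f μ := by
  refine ⟨hf.quasiMeasurePreserving, fun s hs hs0 => ?_⟩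
  by_contra! hret
  have hsum : ∑' n, μ (s ∩ f^[n] ⁻¹' A) ≠ ∞ :=
    ((hf.tsum_measure_inter_iterate_preimage_le hs hret hA).trans_lt hA'.lt_top).ne
  refine hs0 (measure_eq_zero_iff_ae_notMem.2 ?_)
  filter_upwards [ae_eventually_notMem hsum,
    hf.quasiMeasurePreserving.ae_frequently_iterate_mem hcov] with x hfin hfreq hxs
  exact hfreq.and_eventually hfin |>.exists.elim fun n hn => hn.2 ⟨hxs, hn.1⟩

end MeasureTheory

/-- Maharam's recurrence theorem: if a set `A` of finite measure
satisfies `X = ⋃_{k≥1} T⁻ᵏ A` up to an `m`-null set, then `T` is conservative: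
every measurable set `B` is recurrent, i.e. a.e. point of `B` returns to `B`. -/
theorem stmt4 {X : Type*} [MeasurableSpace X] (m : Measure X) (T : X → X)
    (hT : MeasurePreserving T m m) (A : Set X) (hA : MeasurableSet A) (hfin : m A ≠ ⊤)
    (hcov : ∀ᵐ x ∂m, ∃ k, 1 ≤ k ∧ T^[k] x ∈ A) :
    ∀ B : Set X, MeasurableSet B → ∀ᵐ x ∂m.restrict B, ∃ n, 1 ≤ n ∧ T^[n] x ∈ B := by
  intro B hB
  have hcons : Conservative T m :=
    hT.conservative_of_ae_exists_iterate_mem hA hfin (hcov.mono fun _ ⟨k, _, hk⟩ => ⟨k, hk⟩)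
  rw [ae_restrict_iff' hB]
  filter_upwards [hcons.ae_mem_imp_frequently_image_mem hB.nullMeasurableSet] with x hx hxB
  exact frequently_atTop.1 (hx hxB) 1
end

section
/- Let T be a measure preserving transformation of a measure space (X, F, m). Then T is conservative and m is σ-finite if and only if there exists a sequence of measurable sets {A_k} each of finite measure and recurrent for T, whose union covers X up to an m-null set. -/
/-!
Only the converse direction has content. The cover makes `m` σ-finite at once. For
conservativity, let `s` be a measurable set none of whose points ever returns to it, so that the
preimages `T^[n] ⁻¹' s` are pairwise disjoint. For a recurrent set `A` of finite measure, the sets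
`T^[N - j] ⁻¹' (s ∩ T^[j] ⁻¹' A)`, `j < N`, are then disjoint subsets of `T^[N] ⁻¹' A`, so
`∑ j, m (s ∩ T^[j] ⁻¹' A) ≤ m A < ∞` and by Borel–Cantelli almost every point of `s` visits `A`
only finitely often. On the other hand recurrence of `A` applied along the orbit shows that almost
every point of `A` visits `A` infinitely often. Hence `s ∩ A` is null for every `A = A k`, and `s`
is null because the `A k` cover `X` up to a null set. Thus `T` is `Conservative`, and Poincaré
recurrence for conservative maps makes every measurable set recurrent.
-/

open MeasureTheory Set Filter Function

theorem Nat.frequently_atTop_of_zero_of_exists_gt {p : ℕ → Prop} (h0 : p 0)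
    (h : ∀ n, p n → ∃ k > n, p k) : ∃ᶠ n in atTop, p n := by
  rw [frequently_atTop]
  intro N
  induction N with
  | zero => exact ⟨0, le_rfl, h0⟩
  | succ N ih =>
    obtain ⟨n, hNn, hn⟩ := ih
    obtain ⟨k, hnk, hk⟩ := h n hn
    exact ⟨k, by omega, hk⟩

theorem pairwise_disjoint_preimage_iterate_of_forall_notMem {X : Type*} {T : X → X} {s : Set X}
    (hs : ∀ x ∈ s, ∀ n ≠ 0, T^[n] x ∉ s) : Pairwise (Disjoint on fun n => T^[n] ⁻¹' s) := by
  refine (pairwise_disjoint_on _).2 fun i j hij => disjoint_left.2 fun x hi hj => ?_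
  refine hs _ hi (j - i) (by omega) ?_
  rwa [← iterate_add_apply, Nat.sub_add_cancel hij.le]

namespace MeasureTheory

variable {X : Type*} [MeasurableSpace X] {m : Measure X} {T : X → X}

theorem Measure.QuasiMeasurePreserving.ae_mem_imp_frequently_image_mem_of_recurrent
    (hT : QuasiMeasurePreserving T m m) {A : Set X} (hA : NullMeasurableSet A m)
    (hrec : ∀ᵐ x ∂m.restrict A, ∃ n, 1 ≤ n ∧ T^[n] x ∈ A) :
    ∀ᵐ x ∂m, x ∈ A → ∃ᶠ n in atTop, T^[n] x ∈ A := by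
  rw [ae_restrict_iff'₀ hA] at hrec
  have hreturn : ∀ᵐ x ∂m, ∀ n, T^[n] x ∈ A → ∃ k > n, T^[k] x ∈ A := by
    refine ae_all_iff.2 fun n => ((hT.iterate n).ae hrec).mono fun x hx hn => ?_
    obtain ⟨k, hk, hkA⟩ := hx hn
    exact ⟨k + n, by omega, by rwa [iterate_add_apply]⟩
  filter_upwards [hreturn] with x hx hxA
  exact Nat.frequently_atTop_of_zero_of_exists_gt hxA hx

theorem MeasurePreserving.tsum_measure_inter_preimage_iterate_le (hT : MeasurePreserving T m m)
    {s A : Set X} (hs : MeasurableSet s) (hA : MeasurableSet A)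
    (hdisj : Pairwise (Disjoint on fun n => T^[n] ⁻¹' s)) :
    ∑' n, m (s ∩ T^[n] ⁻¹' A) ≤ m A := by
  refine ENNReal.tsum_le_of_sum_range_le fun N => ?_
  have hu : ∀ j, MeasurableSet (s ∩ T^[j] ⁻¹' A) := fun j =>
    hs.inter (hA.preimage (hT.measurable.iterate j))
  set t : ℕ → Set X := fun j => T^[N - j] ⁻¹' (s ∩ T^[j] ⁻¹' A)
  have ht : ∀ j, MeasurableSet (t j) := fun j => (hu j).preimage (hT.measurable.iterate _)
  have ht_disj : (↑(Finset.range N) : Set ℕ).PairwiseDisjoint t := by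
    intro i hi j hj hij
    have hne : N - i ≠ N - j := by simp only [Finset.coe_range, mem_Iio] at hi hj; omega
    exact (hdisj hne).mono (preimage_mono inter_subset_left) (preimage_mono inter_subset_left)
  have ht_sub : ∀ j ∈ Finset.range N, t j ⊆ T^[N] ⁻¹' A := by
    intro j hj x hx
    have hjN : j + (N - j) = N := by rw [Finset.mem_range] at hj; omega
    simpa only [mem_preimage, ← iterate_add_apply, hjN] using hx.2
  calc ∑ j ∈ Finset.range N, m (s ∩ T^[j] ⁻¹' A)
      = ∑ j ∈ Finset.range N, m (t j) := Finset.sum_congr rfl fun j _ =>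
        ((hT.iterate _).measure_preimage (hu j).nullMeasurableSet).symm
    _ = m (⋃ j ∈ Finset.range N, t j) := (measure_biUnion_finset ht_disj fun j _ => ht j).symm
    _ ≤ m (T^[N] ⁻¹' A) := measure_mono (iUnion₂_subset ht_sub)
    _ = m A := (hT.iterate N).measure_preimage hA.nullMeasurableSet

theorem MeasurePreserving.ae_eventually_image_notMem_of_pairwise_disjoint
    (hT : MeasurePreserving T m m) {s A : Set X} (hs : MeasurableSet s) (hA : MeasurableSet A)
    (hA_fin : m A ≠ ⊤) (hdisj : Pairwise (Disjoint on fun n => T^[n] ⁻¹' s)) :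
    ∀ᵐ x ∂m, x ∈ s → ∀ᶠ n in atTop, T^[n] x ∉ A := by
  have hsum := ((hT.tsum_measure_inter_preimage_iterate_le hs hA hdisj).trans_lt hA_fin.lt_top).ne
  filter_upwards [ae_eventually_notMem hsum] with x hx hxs
  exact hx.mono fun n hn hnA => hn ⟨hxs, hnA⟩

theorem MeasurePreserving.conservative_of_ae_cover_recurrent (hT : MeasurePreserving T m m)
    {A : ℕ → Set X} (hA : ∀ k, MeasurableSet (A k)) (hA_fin : ∀ k, m (A k) ≠ ⊤)
    (hA_rec : ∀ k, ∀ᵐ x ∂m.restrict (A k), ∃ n, 1 ≤ n ∧ T^[n] x ∈ A k)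
    (hA_cov : ∀ᵐ x ∂m, ∃ k, x ∈ A k) : Conservative T m := by
  refine ⟨hT.quasiMeasurePreserving, fun s hs hs0 => ?_⟩
  by_contra! hs_wander
  have hdisj := pairwise_disjoint_preimage_iterate_of_forall_notMem hs_wander
  have hsA : ∀ k, ∀ᵐ x ∂m, x ∈ s → x ∉ A k := fun k => by
    filter_upwards [hT.quasiMeasurePreserving.ae_mem_imp_frequently_image_mem_of_recurrent
        (hA k).nullMeasurableSet (hA_rec k),
      hT.ae_eventually_image_notMem_of_pairwise_disjoint hs (hA k) (hA_fin k) hdisj]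
      with x hfreq hev hxs hxA
    exact not_frequently.2 (hev hxs) (hfreq hxA)
  refine hs0 (measure_eq_zero_iff_ae_notMem.2 ?_)
  filter_upwards [hA_cov, ae_all_iff.2 hsA] with x ⟨k, hk⟩ hx hxs
  exact hx k hxs hk

theorem Conservative.ae_restrict_exists_iterate_mem (hT : Conservative T m) {B : Set X}
    (hB : MeasurableSet B) : ∀ᵐ x ∂m.restrict B, ∃ n, 1 ≤ n ∧ T^[n] x ∈ B := by
  rw [ae_restrict_iff' hB]
  filter_upwards [hT.ae_mem_imp_frequently_image_mem hB.nullMeasurableSet] with x hx hxB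
  exact frequently_atTop.1 (hx hxB) 1

theorem Measure.sigmaFinite_of_ae_cover {A : ℕ → Set X} (hA_fin : ∀ k, m (A k) ≠ ⊤)
    (hA_cov : ∀ᵐ x ∂m, ∃ k, x ∈ A k) : SigmaFinite m := by
  refine Measure.sigmaFinite_of_countable (S := insert (⋃ k, A k)ᶜ (range A))
    ((countable_range A).insert _) ?_ ?_
  · rintro s (rfl | ⟨k, rfl⟩)
    · rw [measure_eq_zero_iff_ae_notMem.2 (by simpa using hA_cov)]
      exact ENNReal.zero_lt_top
    · exact (hA_fin k).lt_top
  · rw [sUnion_insert, sUnion_range, compl_union_self]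

end MeasureTheory

/-- `T` is conservative and `m` is σ-finite iff there is a sequence of
measurable sets of finite measure, each recurrent for `T`, covering `X` up to an
`m`-null set. -/
theorem stmt5 {X : Type*} [MeasurableSpace X] (m : Measure X) (T : X → X)
    (hT : MeasurePreserving T m m) :
    ((∀ B : Set X, MeasurableSet B → ∀ᵐ x ∂m.restrict B, ∃ n, 1 ≤ n ∧ T^[n] x ∈ B) ∧
        SigmaFinite m) ↔
      ∃ A : ℕ → Set X, (∀ k, MeasurableSet (A k)) ∧ (∀ k, m (A k) ≠ ⊤) ∧
        (∀ k, ∀ᵐ x ∂m.restrict (A k), ∃ n, 1 ≤ n ∧ T^[n] x ∈ A k) ∧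
        m (Set.univ \ ⋃ k, A k) = 0 := by
  constructor
  · rintro ⟨hrec, hσ⟩
    exact ⟨spanningSets m, measurableSet_spanningSets m,
      fun k => (measure_spanningSets_lt_top m k).ne,
      fun k => hrec _ (measurableSet_spanningSets m k), by simp [iUnion_spanningSets]⟩
  · rintro ⟨A, hA, hA_fin, hA_rec, hA_null⟩
    have hA_cov : ∀ᵐ x ∂m, ∃ k, x ∈ A k :=
      (measure_eq_zero_iff_ae_notMem.1 hA_null).mono fun x hx => by simpa using hx
    exact ⟨fun B hB => (hT.conservative_of_ae_cover_recurrent hA hA_fin hA_rec hA_cov)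
      |>.ae_restrict_exists_iterate_mem hB, Measure.sigmaFinite_of_ae_cover hA_fin hA_cov⟩
end

section
/- (Kac's formula) Let T be a conservative measure preserving transformation of a σ-finite measure space (X, F, m), and let A ∈ F satisfy X = ∪_{k≥1} T^{-k} A up to an m-null set. Then for every B ∈ F, m(B) = ∫_A ∑_{k=0}^{τ_A(x)−1} 1(T^k x ∈ B) m(dx). -/
open MeasureTheory Set ENNReal

/-- First return time of `x` to `A` under `T` (junk value `0` when `x` never returns). -/
noncomputable def tauA {X : Type*} (T : X → X) (A : Set X) (x : X) : ℕ :=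
  sInf {n : ℕ | 1 ≤ n ∧ T^[n] x ∈ A}

/-!
Write `L μ := (T_* μ)|_{Aᶜ}` (`tabooMap T A μ`) for the push-forward that discards the mass
landing in `A`. Since `T_* m = m`, splitting `m = m|_A + m|_{Aᶜ}` and iterating gives
`m = ∑_{k<n} Lᵏ (m|_A) + Lⁿ m`, and `Lᵏ (m|_A) (B)` is the mass of the `x ∈ A` that have not
returned to `A` by time `k` and have `Tᵏ x ∈ B`. So Kac's formula amounts to `Lⁿ m → 0` on sets
of finite measure.

The measures `Lⁿ m` decrease, so they have a limit `λ ≤ m` with `L λ = λ`, that is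
`T_* λ = λ + (T_* λ)|_A`. Iterating, `∑_k (T_* λ)|_A (T⁻ᵏ S) ≤ m S`, which Poincaré recurrence
only allows if `(T_* λ)|_A = 0`. Then `λ` is invariant and vanishes on `A`, hence on every
`T⁻ᵏ A`, hence everywhere because these sets cover `X`.
-/

open Filter Topology

namespace MeasureTheory

variable {X : Type*} [MeasurableSpace X] {m μ ν : Measure X} {T : X → X} {S : Set X}

theorem Measure.ext_of_measure_ne_top [SigmaFinite m]
    (h : ∀ S, MeasurableSet S → m S ≠ ∞ → μ S = ν S) : μ = ν := by
  refine (ext_iff_of_iUnion_eq_univ (iUnion_spanningSets m)).2 fun i => ext fun S hS => ?_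
  rw [restrict_apply hS, restrict_apply hS]
  exact h _ (hS.inter (measurableSet_spanningSets m i))
    ((measure_mono inter_subset_right).trans_lt (measure_spanningSets_lt_top m i)).ne

/-- The limit is built from densities: the setwise infimum `S ↦ ⨅ n, ρ n S` need not be
additive on sets where `ρ 0` is infinite. -/
theorem Measure.exists_le_tendsto_of_antitone {ρ : ℕ → Measure X} (hρ : Antitone ρ)
    [SigmaFinite (ρ 0)] :
    ∃ μ : Measure X, (∀ n, μ ≤ ρ n) ∧
      ∀ S, MeasurableSet S → ρ 0 S ≠ ∞ → Tendsto (fun n => ρ n S) atTop (𝓝 (μ S)) := by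
  obtain ⟨f, hf_meas, hf⟩ : ∃ f : ℕ → X → ℝ≥0∞, (∀ n, Measurable (f n)) ∧
      ∀ n S, ∫⁻ x in S, f n x ∂ρ 0 = ρ n S := by
    have : ∀ n, SigmaFinite (ρ n) := fun n => sigmaFinite_of_le (ρ 0) (hρ n.zero_le)
    exact ⟨fun n => (ρ n).rnDeriv (ρ 0), fun n => measurable_rnDeriv _ _,
      fun n => setLIntegral_rnDeriv (absolutelyContinuous_of_le (hρ n.zero_le))⟩
  have hf_anti : ∀ n, f (n + 1) ≤ᵐ[ρ 0] f n := fun n =>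
    ae_le_of_forall_setLIntegral_le_of_sigmaFinite (hf_meas _) fun S _ _ => by
      rw [hf, hf]
      exact hρ n.le_succ S
  refine ⟨(ρ 0).withDensity fun x => ⨅ n, f n x, fun n => ?_, fun S hS hS0 => ?_⟩
  · refine Measure.le_iff.2 fun S hS => ?_
    rw [withDensity_apply _ hS, ← hf n S]
    exact lintegral_mono fun x => iInf_le _ n
  · rw [withDensity_apply _ hS, lintegral_iInf_ae hf_meas
      (fun n => ae_restrict_of_ae (hf_anti n)) (by rwa [hf])]
    simp_rw [hf]
    exact tendsto_atTop_iInf fun i j hij => hρ hij S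

theorem Conservative.tsum_measure_inter_preimage_iterate_eq_top (hf : Conservative T m)
    (hν : ν ≪ m) (hS : MeasurableSet S) (hνS : ν S ≠ 0) :
    ∑' k, ν (S ∩ T^[k] ⁻¹' S) = ∞ := by
  have hpre : ∀ k, MeasurableSet (T^[k] ⁻¹' S) := fun k => hS.preimage (hf.measurable.iterate k)
  have hrec : ∀ᵐ x ∂ν, x ∈ S → {k | T^[k] x ∈ S}.Infinite :=
    (hf.ae_mem_imp_frequently_image_mem hS.nullMeasurableSet).filter_mono hν.ae_le |>.mono
      fun x hx hxS => Nat.frequently_atTop_iff_infinite.1 (hx hxS)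
  calc ∑' k, ν (S ∩ T^[k] ⁻¹' S) = ∑' k, ∫⁻ x in S, (T^[k] ⁻¹' S).indicator 1 x ∂ν := by
        refine tsum_congr fun k => ?_
        rw [lintegral_indicator_one (hpre k), Measure.restrict_apply (hpre k), Set.inter_comm]
    _ = ∫⁻ x in S, ∑' k, (T^[k] ⁻¹' S).indicator 1 x ∂ν :=
        (lintegral_tsum fun k => (measurable_one.indicator (hpre k)).aemeasurable).symm
    _ = ∫⁻ _ in S, ∞ ∂ν := by
        refine setLIntegral_congr_fun_ae hS (hrec.mono fun x hx hxS => ?_)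
        have := (hx hxS).to_subtype
        change ∑' k, {k | T^[k] x ∈ S}.indicator 1 k = ∞
        rw [← tsum_subtype {k | T^[k] x ∈ S} 1]
        exact ENNReal.tsum_const_eq_top_of_ne_zero one_ne_zero
    _ = ∞ := by rw [setLIntegral_const, top_mul hνS]

theorem Conservative.eq_zero_of_tsum_measure_preimage_iterate_ne_top (hf : Conservative T m)
    [SigmaFinite m] (hν : ν ≪ m)
    (h : ∀ S, MeasurableSet S → m S ≠ ∞ → ∑' k, ν (T^[k] ⁻¹' S) ≠ ∞) : ν = 0 := by
  by_contra hν0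
  obtain ⟨i, hi⟩ : ∃ i, ν (spanningSets m i) ≠ 0 := by
    by_contra! hnull
    refine hν0 (Measure.measure_univ_eq_zero.1 ?_)
    rw [← iUnion_spanningSets m]
    exact measure_iUnion_null hnull
  have hS := measurableSet_spanningSets m i
  refine h _ hS (measure_spanningSets_lt_top m i).ne (top_le_iff.1 ?_)
  calc ∞ = ∑' k, ν (spanningSets m i ∩ T^[k] ⁻¹' spanningSets m i) :=
        (hf.tsum_measure_inter_preimage_iterate_eq_top hν hS hi).symm
    _ ≤ ∑' k, ν (T^[k] ⁻¹' spanningSets m i) :=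
        ENNReal.tsum_le_tsum fun k => measure_mono inter_subset_right

theorem measure_preimage_iterate_eq_add_sum (hT : Measurable T) (h : μ.map T = μ + ν)
    (hS : MeasurableSet S) (n : ℕ) :
    μ (T^[n] ⁻¹' S) = μ S + ∑ k ∈ Finset.range n, ν (T^[k] ⁻¹' S) := by
  induction n with
  | zero => simp
  | succ n ih =>
    have hpre : MeasurableSet (T^[n] ⁻¹' S) := hS.preimage (hT.iterate n)
    rw [Function.iterate_succ, preimage_comp, ← Measure.map_apply hT hpre, h,
      Measure.add_apply, ih, Finset.sum_range_succ, add_assoc]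

theorem Conservative.eq_zero_of_map_eq_add (hf : Conservative T m)
    (hT : MeasurePreserving T m m) [SigmaFinite m] (hμ : μ ≤ m) (h : μ.map T = μ + ν) :
    ν = 0 := by
  have hνm : ν ≤ m := calc
    ν ≤ μ.map T := h ▸ Measure.le_add_left le_rfl
    _ ≤ m.map T := Measure.map_mono hμ hT.measurable
    _ = m := hT.map_eq
  refine hf.eq_zero_of_tsum_measure_preimage_iterate_ne_top
    (Measure.absolutelyContinuous_of_le hνm) fun S hS hSm =>
      ne_top_of_le_ne_top hSm (ENNReal.tsum_le_of_sum_range_le fun n => ?_)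
  calc ∑ k ∈ Finset.range n, ν (T^[k] ⁻¹' S)
        ≤ μ S + ∑ k ∈ Finset.range n, ν (T^[k] ⁻¹' S) := le_add_self
    _ = μ (T^[n] ⁻¹' S) := (measure_preimage_iterate_eq_add_sum hT.measurable h hS n).symm
    _ ≤ m (T^[n] ⁻¹' S) := hμ _
    _ = m S := (hT.iterate n).measure_preimage hS.nullMeasurableSet

theorem conservative_of_forall_ae_exists_iterate_mem
    (hT : Measure.QuasiMeasurePreserving T m m)
    (h : ∀ s, MeasurableSet s → ∀ᵐ x ∂m.restrict s, ∃ n, 1 ≤ n ∧ T^[n] x ∈ s) :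
    Conservative T m where
  toQuasiMeasurePreserving := hT
  exists_mem_iterate_mem' s hs hs0 := by
    have : (ae (m.restrict s)).NeBot := ae_neBot.2 (mt Measure.restrict_eq_zero.1 hs0)
    obtain ⟨x, hxs, n, hn, hx⟩ := ((ae_restrict_mem hs).and (h s hs)).exists
    exact ⟨x, hxs, n, by omega, hx⟩

end MeasureTheory

section NoReturn

variable {X : Type*} {T : X → X} {A : Set X}

def noReturnUntil (T : X → X) (A : Set X) (k : ℕ) : Set X := ⋂ j ∈ Finset.Icc 1 k, T^[j] ⁻¹' Aᶜ

theorem mem_noReturnUntil_iff_lt_tauA {x : X} (hx : ∃ n, 1 ≤ n ∧ T^[n] x ∈ A) (k : ℕ) :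
    x ∈ noReturnUntil T A k ↔ k < tauA T A x := by
  obtain ⟨hτ, hτA⟩ : 1 ≤ tauA T A x ∧ T^[tauA T A x] x ∈ A := Nat.sInf_mem hx
  simp only [noReturnUntil, mem_iInter₂, Finset.mem_Icc, mem_preimage, mem_compl_iff]
  refine ⟨fun h => not_le.1 fun hk => h _ ⟨hτ, hk⟩ hτA, fun hk j hj hjA => ?_⟩
  have : tauA T A x ≤ j := Nat.sInf_le ⟨hj.1, hjA⟩
  omega

theorem measurableSet_noReturnUntil [MeasurableSpace X] (hT : Measurable T)
    (hA : MeasurableSet A) (k : ℕ) : MeasurableSet (noReturnUntil T A k) :=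
  Finset.measurableSet_biInter _ fun j _ => hA.compl.preimage (hT.iterate j)

end NoReturn

section TabooMap

variable {X : Type*} [MeasurableSpace X] {m μ : Measure X} {T : X → X} {A B S : Set X}

noncomputable def tabooMap (T : X → X) (A : Set X) (μ : Measure X) : Measure X :=
  (μ.map T).restrict Aᶜ

theorem tabooMap_apply (hT : Measurable T) (hA : MeasurableSet A) (μ : Measure X)
    (hS : MeasurableSet S) : tabooMap T A μ S = μ (T ⁻¹' (S ∩ Aᶜ)) := by
  rw [tabooMap, Measure.restrict_apply hS, Measure.map_apply hT (hS.inter hA.compl)]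

theorem tabooMap_mono (hT : Measurable T) : Monotone (tabooMap T A) :=
  fun _ _ h => Measure.restrict_mono subset_rfl (Measure.map_mono h hT)

theorem iterate_tabooMap_add (hT : Measurable T) (n : ℕ) (μ ν : Measure X) :
    (tabooMap T A)^[n] (μ + ν) = (tabooMap T A)^[n] μ + (tabooMap T A)^[n] ν := by
  induction n generalizing μ ν with
  | zero => rfl
  | succ n ih =>
    simp only [Function.iterate_succ_apply, tabooMap, Measure.map_add _ _ hT,
      Measure.restrict_add, ih]

theorem tabooMap_eq_restrict_compl (hT : MeasurePreserving T m m) :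
    tabooMap T A m = m.restrict Aᶜ := by
  rw [tabooMap, hT.map_eq]

theorem iterate_tabooMap_apply (hT : Measurable T) (hA : MeasurableSet A) (μ : Measure X)
    (k : ℕ) (hB : MeasurableSet B) :
    (tabooMap T A)^[k] μ B = μ (noReturnUntil T A k ∩ T^[k] ⁻¹' B) := by
  induction k generalizing B with
  | zero => simp [noReturnUntil]
  | succ k ih =>
    rw [Function.iterate_succ_apply', tabooMap_apply hT hA _ hB,
      ih ((hB.inter hA.compl).preimage hT)]
    congr 1
    ext x
    simp only [noReturnUntil, mem_inter_iff, mem_iInter₂, Finset.mem_Icc, mem_preimage,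
      mem_compl_iff, Function.iterate_succ_apply']
    constructor
    · rintro ⟨hk, hxB, hxA⟩
      refine ⟨fun i hi => ?_, hxB⟩
      obtain hi' | rfl := Nat.le_succ_iff.1 hi.2
      · exact hk i ⟨hi.1, hi'⟩
      · rwa [Function.iterate_succ_apply']
    · rintro ⟨hk, hxB⟩
      refine ⟨fun i hi => hk i ⟨hi.1, hi.2.trans k.le_succ⟩, hxB, ?_⟩
      simpa only [Function.iterate_succ_apply'] using hk (k + 1) ⟨k.succ_pos, le_rfl⟩

theorem eq_zero_of_tabooMap_eq_self (hT : MeasurePreserving T m m) (hf : Conservative T m)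
    [SigmaFinite m] (hA : MeasurableSet A) (hcov : ∀ᵐ x ∂m, ∃ k, T^[k] x ∈ A) (hμ : μ ≤ m)
    (hfix : tabooMap T A μ = μ) : μ = 0 := by
  have hsplit : μ.map T = μ + (μ.map T).restrict A := calc
    μ.map T = (μ.map T).restrict A + tabooMap T A μ :=
      (Measure.restrict_add_restrict_compl hA).symm
    _ = μ + (μ.map T).restrict A := by rw [hfix, add_comm]
  have hA0 : μ A = 0 := by
    rw [← hfix, tabooMap, Measure.restrict_apply hA, inter_compl_self, measure_empty]
  have hinv : ∀ k, μ (T^[k] ⁻¹' A) = 0 := fun k => by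
    rw [measure_preimage_iterate_eq_add_sum hT.measurable hsplit hA k,
      hf.eq_zero_of_map_eq_add hT hμ hsplit, hA0]
    simp
  have hfalse : ∀ᵐ _ ∂μ, False := by
    filter_upwards [hcov.filter_mono (Measure.absolutelyContinuous_of_le hμ).ae_le,
      ae_all_iff.2 fun k => measure_eq_zero_iff_ae_notMem.1 (hinv k)] with x ⟨k, hk⟩ hx
    exact hx k hk
  exact ae_eq_bot.1 (eventually_false_iff_eq_bot.1 hfalse)

theorem tendsto_iterate_tabooMap_apply_zero (hT : MeasurePreserving T m m)
    (hf : Conservative T m) [SigmaFinite m] (hA : MeasurableSet A)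
    (hcov : ∀ᵐ x ∂m, ∃ k, T^[k] x ∈ A) {W : Set X} (hW : MeasurableSet W) (hWm : m W ≠ ∞) :
    Tendsto (fun n => (tabooMap T A)^[n] m W) atTop (𝓝 0) := by
  have hanti : Antitone fun n => (tabooMap T A)^[n] m :=
    (tabooMap_mono hT.measurable).antitone_iterate_of_map_le
      ((tabooMap_eq_restrict_compl hT).trans_le Measure.restrict_le_self)
  have : SigmaFinite ((tabooMap T A)^[0] m) := ‹SigmaFinite m›
  obtain ⟨μ, hμ, hlim⟩ := Measure.exists_le_tendsto_of_antitone hanti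
  have hfix : tabooMap T A μ = μ := Measure.ext_of_measure_ne_top (m := m) fun S hS hSm => by
    have hS' : MeasurableSet (T ⁻¹' (S ∩ Aᶜ)) := (hS.inter hA.compl).preimage hT.measurable
    have hS'm : m (T ⁻¹' (S ∩ Aᶜ)) ≠ ∞ := by
      rw [hT.measure_preimage (hS.inter hA.compl).nullMeasurableSet]
      exact ne_top_of_le_ne_top hSm (measure_mono inter_subset_left)
    refine tendsto_nhds_unique ?_ ((hlim S hS hSm).comp (tendsto_add_atTop_nat 1))
    rw [tabooMap_apply hT.measurable hA μ hS]
    refine (hlim _ hS' hS'm).congr fun n => ?_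
    simp only [Function.comp_apply, Function.iterate_succ_apply',
      tabooMap_apply hT.measurable hA _ hS]
  have hμ0 := eq_zero_of_tabooMap_eq_self hT hf hA hcov (hμ 0) hfix
  simpa [hμ0] using hlim W hW hWm

theorem measure_eq_sum_add_iterate_tabooMap (hT : MeasurePreserving T m m)
    (hA : MeasurableSet A) (n : ℕ) :
    m = ∑ k ∈ Finset.range n, (tabooMap T A)^[k] (m.restrict A) + (tabooMap T A)^[n] m := by
  induction n with
  | zero => simp
  | succ n ih =>
    rwa [Finset.sum_range_succ, add_assoc, Function.iterate_succ_apply,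
      tabooMap_eq_restrict_compl hT, ← iterate_tabooMap_add hT.measurable,
      Measure.restrict_add_restrict_compl hA]

theorem measure_eq_sum_iterate_tabooMap (hT : MeasurePreserving T m m) (hf : Conservative T m)
    [SigmaFinite m] (hA : MeasurableSet A) (hcov : ∀ᵐ x ∂m, ∃ k, T^[k] x ∈ A) :
    m = Measure.sum fun k => (tabooMap T A)^[k] (m.restrict A) := by
  refine Measure.ext_of_measure_ne_top (m := m) fun W hW hWm => ?_
  have hsplit : ∀ n, m W =
      ∑ k ∈ Finset.range n, (tabooMap T A)^[k] (m.restrict A) W + (tabooMap T A)^[n] m W :=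
    fun n => by
      conv_lhs => rw [measure_eq_sum_add_iterate_tabooMap hT hA n]
      simp [Measure.coe_finsetSum]
  rw [Measure.sum_apply _ hW]
  refine tendsto_nhds_unique (tendsto_const_nhds.congr hsplit : Tendsto _ atTop _) ?_
  simpa using (ENNReal.tendsto_nat_tsum _).add
    (tendsto_iterate_tabooMap_apply_zero hT hf hA hcov hW hWm)

theorem setLIntegral_sum_indicator_eq_sum_iterate_tabooMap (hT : Measurable T)
    (hA : MeasurableSet A) (hret : ∀ᵐ x ∂m.restrict A, ∃ n, 1 ≤ n ∧ T^[n] x ∈ A)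
    (hB : MeasurableSet B) :
    ∫⁻ x in A, ∑ k ∈ Finset.range (tauA T A x), B.indicator (fun _ => 1) (T^[k] x) ∂m =
      Measure.sum (fun k => (tabooMap T A)^[k] (m.restrict A)) B := by
  have hmeas : ∀ k, MeasurableSet (noReturnUntil T A k ∩ T^[k] ⁻¹' B) :=
    fun k => (measurableSet_noReturnUntil hT hA k).inter (hB.preimage (hT.iterate k))
  simp_rw [Measure.sum_apply _ hB, iterate_tabooMap_apply hT hA _ _ hB,
    ← lintegral_indicator_one (hmeas _)]
  rw [← lintegral_tsum fun k => (measurable_one.indicator (hmeas k)).aemeasurable]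
  refine lintegral_congr_ae (hret.mono fun x hx => ?_)
  dsimp only
  rw [sum_eq_tsum_indicator]
  refine tsum_congr fun k => ?_
  have hxN := mem_noReturnUntil_iff_lt_tauA hx k
  by_cases hk : k < tauA T A x <;> by_cases hkB : T^[k] x ∈ B <;>
    simp [hk, hkB, hxN, Set.indicator_of_mem, Set.indicator_of_notMem]

end TabooMap

/-- Kac's formula: for a conservative measure preserving `T` on a
σ-finite space and a set `A` with `X = ⋃_{k≥1} T⁻ᵏ A (mod m)`, every measurable `B`
satisfies `m(B) = ∫_A ∑_{k=0}^{τ_A(x)-1} 1_B(Tᵏ x) dm(x)`. -/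
theorem stmt6 {X : Type*} [MeasurableSpace X] (m : Measure X) [SigmaFinite m]
    (T : X → X) (hT : MeasurePreserving T m m)
    (hcons : ∀ B : Set X, MeasurableSet B → ∀ᵐ x ∂m.restrict B, ∃ n, 1 ≤ n ∧ T^[n] x ∈ B)
    (A : Set X) (hA : MeasurableSet A)
    (hcov : ∀ᵐ x ∂m, ∃ k, 1 ≤ k ∧ T^[k] x ∈ A) :
    ∀ B : Set X, MeasurableSet B →
      m B = ∫⁻ x in A, ∑ k ∈ Finset.range (tauA T A x),
        B.indicator (fun _ => (1 : ℝ≥0∞)) (T^[k] x) ∂m := by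
  intro B hB
  have hf := conservative_of_forall_ae_exists_iterate_mem hT.quasiMeasurePreserving hcons
  rw [setLIntegral_sum_indicator_eq_sum_iterate_tabooMap hT.measurable hA
    (ae_restrict_of_ae hcov) hB, ← measure_eq_sum_iterate_tabooMap hT hf hA
    (hcov.mono fun _ ⟨k, _, hk⟩ => ⟨k, hk⟩)]
end

section
/- Let T be a measurable transformation of a measurable space (X, F), A ∈ F nonempty, and m_0 a measure on A with m_0(A \ ∪_{k≥1} T^{-k}A) = 0 that is invariant under the induced map T_A. Then the measure m(B) := ∫_A ∑_{k=0}^{τ_A(x)−1} 1(T^k x ∈ B) m_0(dx) on (X, F) is invariant for T, its restriction to A equals m_0, and m({τ_A = ∞}) = 0. -/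
open MeasureTheory Set ENNReal

/-- The induced map `T_A x = T^[τ_A x] x`. -/
noncomputable def inducedMap {X : Type*} (T : X → X) (A : Set X) (x : X) : X :=
  T^[tauA T A x] x

theorem Nat.lt_sInf_iff_nonempty {s : Set ℕ} {k : ℕ} :
    k < sInf s ↔ s.Nonempty ∧ ∀ m ≤ k, m ∉ s := by
  refine ⟨fun h => ⟨Nat.nonempty_of_pos_sInf (by omega),
    fun m hm => Nat.notMem_of_lt_sInf (by omega)⟩, fun ⟨hne, hs⟩ => ?_⟩
  by_contra! hle
  exact hs _ hle (Nat.sInf_mem hne)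

section HittingTime

variable {X : Type*} [MeasurableSpace X]

theorem measurable_sInf_setOf_mem {s : ℕ → Set X} (hs : ∀ n, MeasurableSet (s n)) :
    Measurable fun x => sInf {n | x ∈ s n} := by
  refine measurable_of_Ioi fun k => ?_
  have : (fun x => sInf {n | x ∈ s n}) ⁻¹' Ioi k = (⋃ n, s n) ∩ ⋂ m ≤ k, (s m)ᶜ := by
    ext x
    simp [Nat.lt_sInf_iff_nonempty, Set.Nonempty]
  rw [this]
  exact (MeasurableSet.iUnion hs).inter
    (MeasurableSet.biInter (to_countable _) fun m _ => (hs m).compl)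

theorem measurable_iterate_apply {T : X → X} (hT : Measurable T) {N : X → ℕ} (hN : Measurable N) :
    Measurable fun x => T^[N x] x :=
  (measurable_from_prod_countable_left (f := fun p : X × ℕ => T^[p.2] p.1)
    fun n => hT.iterate n).comp (measurable_id.prodMk hN)

end HittingTime

section ReturnTime

variable {X : Type*} {T : X → X} {A : Set X} {x : X}

theorem tauA_pos_iff : 0 < tauA T A x ↔ ∃ n, 1 ≤ n ∧ T^[n] x ∈ A := by
  simp [tauA, Nat.pos_iff_ne_zero, Nat.sInf_eq_zero, Set.eq_empty_iff_forall_notMem]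

theorem inducedMap_mem (h : ∃ n, 1 ≤ n ∧ T^[n] x ∈ A) : inducedMap T A x ∈ A :=
  (Nat.sInf_mem h).2

theorem iterate_notMem_of_lt_tauA {k : ℕ} (hk : 1 ≤ k) (hlt : k < tauA T A x) : T^[k] x ∉ A :=
  fun hA => Nat.notMem_of_lt_sInf hlt ⟨hk, hA⟩

theorem exists_iterate_mem_of_lt_tauA {k : ℕ} (hk : k < tauA T A x) :
    ∃ n, 1 ≤ n ∧ T^[n] (T^[k] x) ∈ A := by
  refine ⟨tauA T A x - k, by omega, ?_⟩
  rw [← Function.iterate_add_apply, Nat.sub_add_cancel hk.le]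
  exact inducedMap_mem (tauA_pos_iff.1 (by omega))

variable [MeasurableSpace X]

theorem measurable_tauA (hT : Measurable T) (hA : MeasurableSet A) : Measurable (tauA T A) :=
  measurable_sInf_setOf_mem fun n => (MeasurableSet.const (1 ≤ n)).inter (hT.iterate n hA)

theorem measurable_inducedMap (hT : Measurable T) (hA : MeasurableSet A) :
    Measurable (inducedMap T A) :=
  measurable_iterate_apply hT (measurable_tauA hT hA)

end ReturnTime

section Tower

variable {X : Type*} [MeasurableSpace X] {T : X → X} {N : X → ℕ} {μ : Measure X}

/-- Kakutani's tower over `μ` with heights `N`: the point `x` contributes a unit mass at each of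
`x, T x, …, T^[N x - 1] x`. -/
noncomputable def towerMeasure (T : X → X) (N : X → ℕ) (μ : Measure X) : Measure X :=
  Measure.sum fun k => (μ.restrict {x | k < N x}).map T^[k]

theorem lintegral_towerMeasure (hT : Measurable T) (hN : Measurable N) {f : X → ℝ≥0∞}
    (hf : Measurable f) :
    ∫⁻ y, f y ∂towerMeasure T N μ = ∫⁻ x, ∑ k ∈ Finset.range (N x), f (T^[k] x) ∂μ := by
  have hlevel : ∀ k, MeasurableSet {x | k < N x} := fun k => measurableSet_lt measurable_const hN
  have hsum : ∀ x, ∑ k ∈ Finset.range (N x), f (T^[k] x) =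
      ∑' k, {x | k < N x}.indicator (fun x => f (T^[k] x)) x := by
    intro x
    rw [tsum_eq_sum (f := fun k => {x | k < N x}.indicator (fun x => f (T^[k] x)) x)
      (s := Finset.range (N x)) fun k hk =>
        indicator_of_notMem (s := {x | k < N x}) (fun h => hk (Finset.mem_range.2 h)) _]
    exact Finset.sum_congr rfl fun k hk =>
      (indicator_of_mem (s := {x | k < N x}) (Finset.mem_range.1 hk) fun x => f (T^[k] x)).symm
  have hmeas : ∀ k, Measurable ({x | k < N x}.indicator fun x => f (T^[k] x)) :=
    fun k => (hf.comp (hT.iterate k)).indicator (hlevel k)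
  simp_rw [towerMeasure, lintegral_sum_measure, lintegral_map hf (hT.iterate _), hsum]
  rw [lintegral_tsum fun k => (hmeas k).aemeasurable]
  exact tsum_congr fun k => (lintegral_indicator (hlevel k) _).symm

theorem measurePreserving_towerMeasure (hT : Measurable T) (hN : Measurable N)
    (hpos : ∀ᵐ x ∂μ, 1 ≤ N x) (hret : MeasurePreserving (fun x => T^[N x] x) μ μ) :
    MeasurePreserving T (towerMeasure T N μ) (towerMeasure T N μ) := by
  refine ⟨hT, Measure.ext_of_lintegral _ fun f hf => ?_⟩
  set g : X → ℝ≥0∞ := fun x => ∑ k ∈ Finset.range (N x - 1), f (T^[k + 1] x)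
  have hshift : ∀ᵐ x ∂μ, ∑ k ∈ Finset.range (N x), f (T^[k] (T x)) = g x + f (T^[N x] x) := by
    filter_upwards [hpos] with x hx
    obtain ⟨n, hn⟩ := Nat.exists_eq_add_of_le' hx
    simp only [g, hn, Nat.add_sub_cancel]
    exact Finset.sum_range_succ (fun k => f (T^[k + 1] x)) n
  have hbase : ∀ᵐ x ∂μ, ∑ k ∈ Finset.range (N x), f (T^[k] x) = g x + f x := by
    filter_upwards [hpos] with x hx
    obtain ⟨n, hn⟩ := Nat.exists_eq_add_of_le' hx
    simp only [g, hn, Nat.add_sub_cancel]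
    exact Finset.sum_range_succ' (fun k => f (T^[k] x)) n
  calc ∫⁻ y, f y ∂(towerMeasure T N μ).map T
      = ∫⁻ x, ∑ k ∈ Finset.range (N x), f (T^[k] (T x)) ∂μ := by
        rw [lintegral_map hf hT, lintegral_towerMeasure hT hN (f := fun y => f (T y)) (hf.comp hT)]
        simp only [← Function.iterate_succ_apply', Function.iterate_succ_apply]
    _ = ∫⁻ x, g x ∂μ + ∫⁻ x, f x ∂μ := by
        rw [lintegral_congr_ae hshift,
          lintegral_add_right' _ (g := fun x => f (T^[N x] x))
            (hf.comp hret.measurable).aemeasurable,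
          hret.lintegral_comp hf]
    _ = ∫⁻ y, f y ∂towerMeasure T N μ := by
        rw [lintegral_towerMeasure hT hN hf, lintegral_congr_ae hbase,
          lintegral_add_right' _ hf.aemeasurable]

theorem towerMeasure_restrict_base (hT : Measurable T) (hN : Measurable N) {A : Set X}
    (hA : MeasurableSet A) (hμA : μ Aᶜ = 0) (hpos : ∀ᵐ x ∂μ, 1 ≤ N x)
    (hfloor : ∀ x k, 1 ≤ k → k < N x → T^[k] x ∉ A) :
    (towerMeasure T N μ).restrict A = μ := by
  ext s hs
  have hsA := hs.inter hA
  have hbase : ∀ᵐ x ∂μ, ∑ k ∈ Finset.range (N x), (s ∩ A).indicator (1 : X → ℝ≥0∞) (T^[k] x) =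
      (s ∩ A).indicator 1 x := by
    filter_upwards [hpos] with x hx
    refine Finset.sum_eq_single_of_mem 0 (Finset.mem_range.2 hx) fun k hk hk0 => ?_
    exact indicator_of_notMem (fun h => hfloor x k (by omega) (Finset.mem_range.1 hk) h.2) _
  rw [Measure.restrict_apply hs, ← lintegral_indicator_one hsA,
    lintegral_towerMeasure hT hN (measurable_one.indicator hsA), lintegral_congr_ae hbase,
    lintegral_indicator_one hsA, measure_inter_conull hμA]

theorem towerMeasure_eq_zero (hT : Measurable T) (hN : Measurable N) {S : Set X}
    (hS : MeasurableSet S) (hS_avoid : ∀ x, ∀ k < N x, T^[k] x ∉ S) :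
    towerMeasure T N μ S = 0 := by
  rw [← lintegral_indicator_one hS, lintegral_towerMeasure hT hN (measurable_one.indicator hS)]
  have hzero : ∀ x, ∑ k ∈ Finset.range (N x), S.indicator (1 : X → ℝ≥0∞) (T^[k] x) = 0 :=
    fun x => Finset.sum_eq_zero fun k hk =>
      indicator_of_notMem (hS_avoid x k (Finset.mem_range.1 hk)) _
  rw [lintegral_congr hzero, lintegral_zero]

end Tower

theorem measurePreserving_of_forall_subset {X : Type*} [MeasurableSpace X] {μ : Measure X}
    {φ : X → X} {A : Set X} (hφ : Measurable φ) (hA : MeasurableSet A) (hμA : μ Aᶜ = 0)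
    (hφA : ∀ᵐ x ∂μ, φ x ∈ A) (h : ∀ B, MeasurableSet B → B ⊆ A → μ (φ ⁻¹' B) = μ B) :
    MeasurePreserving φ μ μ := by
  refine ⟨hφ, Measure.ext fun B hB => ?_⟩
  have hae : φ ⁻¹' (B ∩ A) =ᵐ[μ] φ ⁻¹' B := by
    filter_upwards [hφA] with x hx
    exact propext (and_iff_left hx)
  rw [Measure.map_apply hφ hB, ← measure_congr hae, h _ (hB.inter hA) inter_subset_right,
    measure_inter_conull hμA]

theorem stmt7_general {X : Type*} [MeasurableSpace X] (T : X → X) (hT : Measurable T)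
    (A : Set X) (hA : MeasurableSet A)
    (m0 : Measure X) (hconc : m0 Aᶜ = 0)
    (hsupp : m0 (A ∩ {x | ¬ ∃ k, 1 ≤ k ∧ T^[k] x ∈ A}) = 0)
    (hinv0 : ∀ B : Set X, MeasurableSet B → B ⊆ A → m0 (inducedMap T A ⁻¹' B) = m0 B) :
    ∃ m : Measure X,
      (∀ B : Set X, MeasurableSet B →
        m B = ∫⁻ x in A, ∑ k ∈ Finset.range (tauA T A x),
          B.indicator (fun _ => (1 : ℝ≥0∞)) (T^[k] x) ∂m0) ∧
      (∀ B : Set X, MeasurableSet B → m (T ⁻¹' B) = m B) ∧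
      m.restrict A = m0 ∧
      m {x | ¬ ∃ n, 1 ≤ n ∧ T^[n] x ∈ A} = 0 := by
  have hτ := measurable_tauA hT hA
  have hrestrict : m0.restrict A = m0 := Measure.restrict_eq_self_of_ae_mem hconc
  have hret : ∀ᵐ x ∂m0, ∃ n, 1 ≤ n ∧ T^[n] x ∈ A := by
    rw [ae_iff, ← measure_inter_conull hconc, inter_comm]
    exact hsupp
  have hpos : ∀ᵐ x ∂m0, 1 ≤ tauA T A x := hret.mono fun x hx => tauA_pos_iff.2 hx
  have hinduced : MeasurePreserving (inducedMap T A) m0 m0 :=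
    measurePreserving_of_forall_subset (measurable_inducedMap hT hA) hA hconc
      (hret.mono fun x hx => inducedMap_mem hx) hinv0
  refine ⟨towerMeasure T (tauA T A) m0, fun B hB => ?_, fun B hB => ?_, ?_, ?_⟩
  · rw [hrestrict, ← lintegral_indicator_one hB,
      lintegral_towerMeasure hT hτ (measurable_one.indicator hB)]
    rfl
  · exact (measurePreserving_towerMeasure hT hτ hpos hinduced).measure_preimage
      hB.nullMeasurableSet
  · exact towerMeasure_restrict_base hT hτ hA hconc hpos fun x k => iterate_notMem_of_lt_tauA
  · have hS : {x | ¬ ∃ n, 1 ≤ n ∧ T^[n] x ∈ A} = tauA T A ⁻¹' {0} := by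
      ext x
      simp [← tauA_pos_iff]
    refine towerMeasure_eq_zero hT hτ (hS ▸ hτ (measurableSet_singleton 0)) fun x k hk h => ?_
    exact h (exists_iterate_mem_of_lt_tauA hk)

/-- given a measure `m₀` on `A`, concentrated on points returning to `A`
and invariant under the induced map `T_A`, the measure
`m(B) = ∫_A ∑_{k=0}^{τ_A(x)-1} 1_B(Tᵏ x) dm₀(x)` is invariant for `T`, restricts
to `m₀` on `A`, and gives zero mass to `{τ_A = ∞}`. -/
theorem stmt7 {X : Type*} [MeasurableSpace X] (T : X → X) (hT : Measurable T)
    (A : Set X) (hA : MeasurableSet A) (hne : A.Nonempty)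
    (m0 : Measure X) (hconc : m0 Aᶜ = 0)
    (hsupp : m0 (A ∩ {x | ¬ ∃ k, 1 ≤ k ∧ T^[k] x ∈ A}) = 0)
    (hinv0 : ∀ B : Set X, MeasurableSet B → B ⊆ A → m0 (inducedMap T A ⁻¹' B) = m0 B) :
    ∃ m : Measure X,
      (∀ B : Set X, MeasurableSet B →
        m B = ∫⁻ x in A, ∑ k ∈ Finset.range (tauA T A x),
          B.indicator (fun _ => (1 : ℝ≥0∞)) (T^[k] x) ∂m0) ∧
      (∀ B : Set X, MeasurableSet B → m (T ⁻¹' B) = m B) ∧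
      m.restrict A = m0 ∧
      m {x | ¬ ∃ n, 1 ≤ n ∧ T^[n] x ∈ A} = 0 :=
  stmt7_general T hT A hA m0 hconc hsupp hinv0
end

section
/- Let Y be a topologically irreducible weak Feller Markov chain on a metric space X with a nonzero invariant Borel measure μ. If μ is finite on some nonempty open set, then μ is locally finite (every point has an open neighbourhood of finite μ-measure). -/
/-!
Fix `x` and a nonempty open set `G` with `μ G < ∞`. By irreducibility `Pⁿ(x, G) > 0` for some `n`.
The iterate `Pⁿ` is again weak Feller, so by the portmanteau theorem `y ↦ Pⁿ(y, G)` is lower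
semicontinuous, and `Pⁿ(y, G) > c := Pⁿ(x, G) / 2` on an open neighbourhood `U` of `x`.
Since `μ` is `Pⁿ`-invariant, `c μ(U) ≤ ∫ Pⁿ(y, G) dμ(y) = μ(G) < ∞`.
-/

open MeasureTheory ProbabilityTheory BoundedContinuousFunction

/-- `n`-step transition kernel of a Markov kernel. -/
noncomputable def iterK {X : Type*} [MeasurableSpace X] (P : Kernel X X) : ℕ → Kernel X X
  | 0 => Kernel.id
  | n + 1 => P.comp (iterK P n)

namespace ProbabilityTheory.Kernel

lemma mul_measure_le_of_le_apply {X : Type*} [MeasurableSpace X] {κ : Kernel X X}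
    {μ : Measure X} (hinv : μ.bind (fun x => κ x) = μ) {G U : Set X} (hG : MeasurableSet G)
    {c : ENNReal} (hc : ∀ y ∈ U, c ≤ κ y G) : c * μ U ≤ μ G :=
  calc c * μ U = ∫⁻ _ in U, c ∂μ := by rw [MeasureTheory.setLIntegral_const]
    _ ≤ ∫⁻ y in U, κ y G ∂μ := setLIntegral_mono (κ.measurable_coe hG) hc
    _ ≤ ∫⁻ y, κ y G ∂μ := setLIntegral_le_lintegral _ _
    _ = μ G := by rw [← Measure.bind_apply hG κ.aemeasurable, hinv]

section WeakFeller

variable {X Y Z : Type*} [MeasurableSpace X] [MeasurableSpace Y] [MeasurableSpace Z]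
  [TopologicalSpace X] [TopologicalSpace Y] [TopologicalSpace Z]

def IsWeakFeller (κ : Kernel X Y) : Prop :=
  ∀ f : Y →ᵇ ℝ, Continuous fun x => ∫ y, f y ∂(κ x)

lemma isWeakFeller_id [OpensMeasurableSpace X] : IsWeakFeller (Kernel.id : Kernel X X) := by
  intro f
  simpa only [id_apply, integral_dirac' _ _ f.continuous.stronglyMeasurable] using f.continuous

lemma IsWeakFeller.comp [OpensMeasurableSpace Z] {κ : Kernel X Y} {η : Kernel Y Z}
    [IsFiniteKernel κ] [IsMarkovKernel η] (hκ : κ.IsWeakFeller) (hη : η.IsWeakFeller) :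
    (η.comp κ).IsWeakFeller := by
  intro f
  let g : Y →ᵇ ℝ := ofNormedAddCommGroup (fun y => ∫ z, f z ∂(η y)) (hη f) ‖f‖
    fun y => f.norm_integral_le_norm (μ := η y)
  have hg : ∀ x, ∫ z, f z ∂(η.comp κ x) = ∫ y, g y ∂(κ x) := fun x =>
    integral_comp (f.integrable _)
  simpa only [hg] using hκ g

lemma IsWeakFeller.lowerSemicontinuous_apply [OpensMeasurableSpace Y] [HasOuterApproxClosed Y]
    {κ : Kernel X Y} [IsMarkovKernel κ] (hκ : κ.IsWeakFeller) {G : Set Y} (hG : IsOpen G) :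
    LowerSemicontinuous fun x => κ x G := by
  let ν : X → ProbabilityMeasure Y := fun x => ⟨κ x, inferInstance⟩
  have hν : Continuous ν := continuous_iff_continuousAt.2 fun x =>
    ProbabilityMeasure.tendsto_iff_forall_integral_tendsto.2 fun f => (hκ f).continuousAt
  exact lowerSemicontinuous_iff_le_liminf.2 fun x =>
    ProbabilityMeasure.le_liminf_measure_open_of_tendsto (hν.tendsto x) hG

lemma IsWeakFeller.exists_isOpen_mem_measure_lt_top [OpensMeasurableSpace X]
    [HasOuterApproxClosed X] {κ : Kernel X X} [IsMarkovKernel κ] (hκ : κ.IsWeakFeller)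
    {μ : Measure X} (hinv : μ.bind (fun x => κ x) = μ) {G : Set X} (hG : IsOpen G)
    (hμG : μ G < ⊤) {x : X} (hx : 0 < κ x G) :
    ∃ U : Set X, IsOpen U ∧ x ∈ U ∧ μ U < ⊤ := by
  set c := κ x G / 2
  have hc : c ≠ 0 := (ENNReal.half_pos hx.ne').ne'
  have hxc : c < κ x G := ENNReal.half_lt_self hx.ne' (measure_ne_top _ _)
  refine ⟨{y | c < κ y G}, (hκ.lowerSemicontinuous_apply hG).isOpen_preimage c, hxc, ?_⟩
  have hcU : c * μ {y | c < κ y G} ≤ μ G :=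
    mul_measure_le_of_le_apply hinv hG.measurableSet fun y hy => le_of_lt hy
  exact ENNReal.lt_top_of_mul_ne_top_right (hcU.trans_lt hμG).ne hc

end WeakFeller

end ProbabilityTheory.Kernel

section Iterates

variable {X : Type*} [MeasurableSpace X]

instance isMarkovKernel_iterK (P : Kernel X X) [IsMarkovKernel P] (n : ℕ) :
    IsMarkovKernel (iterK P n) := by
  induction n with
  | zero => rw [iterK]; infer_instance
  | succ n _ => rw [iterK]; infer_instance

lemma bind_iterK_eq_self {P : Kernel X X} {μ : Measure X} (hinv : μ.bind (fun x => P x) = μ)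
    (n : ℕ) : μ.bind (fun x => iterK P n x) = μ := by
  induction n with
  | zero => simp only [iterK, Kernel.id_apply, Measure.bind_dirac]
  | succ n ih =>
    simp only [iterK, Kernel.comp_apply]
    rw [← Measure.bind_bind (iterK P n).aemeasurable P.aemeasurable, ih, hinv]

lemma isWeakFeller_iterK [TopologicalSpace X] [OpensMeasurableSpace X] {P : Kernel X X}
    [IsMarkovKernel P] (hP : P.IsWeakFeller) (n : ℕ) : (iterK P n).IsWeakFeller := by
  induction n with
  | zero => exact Kernel.isWeakFeller_id
  | succ n ih => exact ih.comp hP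

end Iterates

theorem stmt8_general {X : Type*} [MetricSpace X] [MeasurableSpace X] [BorelSpace X]
    (P : Kernel X X) [IsMarkovKernel P]
    (hFeller : ∀ f : X →ᵇ ℝ, Continuous fun x => ∫ y, f y ∂(P x))
    (hirr : ∀ x : X, ∀ G : Set X, IsOpen G → G.Nonempty →
      ∃ n, 1 ≤ n ∧ 0 < iterK P n x G)
    (μ : Measure X) (hinv : μ.bind (fun x => P x) = μ)
    (hfin : ∃ G : Set X, IsOpen G ∧ G.Nonempty ∧ μ G < ⊤) :
    ∀ x : X, ∃ U : Set X, IsOpen U ∧ x ∈ U ∧ μ U < ⊤ := by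
  obtain ⟨G, hG, hGne, hμG⟩ := hfin
  intro x
  obtain ⟨n, -, hn⟩ := hirr x G hG hGne
  exact Kernel.IsWeakFeller.exists_isOpen_mem_measure_lt_top (isWeakFeller_iterK hFeller n)
    (bind_iterK_eq_self hinv n) hG hμG hn

/-- a topologically irreducible weak Feller chain with a nonzero
invariant Borel measure `μ` that is finite on some nonempty open set has a
locally finite `μ`. -/
theorem stmt8 {X : Type*} [MetricSpace X] [MeasurableSpace X] [BorelSpace X]
    (P : Kernel X X) [IsMarkovKernel P]
    (hFeller : ∀ f : X →ᵇ ℝ, Continuous fun x => ∫ y, f y ∂(P x))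
    (hirr : ∀ x : X, ∀ G : Set X, IsOpen G → G.Nonempty →
      ∃ n, 1 ≤ n ∧ 0 < iterK P n x G)
    (μ : Measure X) (hμ : μ ≠ 0) (hinv : μ.bind (fun x => P x) = μ)
    (hfin : ∃ G : Set X, IsOpen G ∧ G.Nonempty ∧ μ G < ⊤) :
    ∀ x : X, ∃ U : Set X, IsOpen U ∧ x ∈ U ∧ μ U < ⊤ :=
  stmt8_general P hFeller hirr μ hinv hfin
end

section
/- Let Y be a topologically irreducible weak Feller Markov chain on a separable metric space X with a nonzero invariant Borel measure μ. Then μ is strictly positive on every nonempty open set. -/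
open MeasureTheory ProbabilityTheory BoundedContinuousFunction

namespace iterK

variable {X : Type*} [MeasurableSpace X] (P : Kernel X X)

lemma coe_zero : ⇑(iterK P 0) = Measure.dirac := rfl

lemma coe_succ (n : ℕ) : ⇑(iterK P (n + 1)) = fun x => (iterK P n x).bind P := rfl

variable {P} {μ : Measure X}

lemma bind_eq_self (hinv : μ.bind P = μ) (n : ℕ) : μ.bind (iterK P n) = μ := by
  induction n with
  | zero => rw [coe_zero, Measure.bind_dirac]
  | succ n ih =>
    rw [coe_succ, ← Measure.bind_bind (iterK P n).aemeasurable P.aemeasurable, ih, hinv]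

lemma ae_forall_apply_eq_zero (hinv : μ.bind P = μ) {s : Set X} (hs : MeasurableSet s)
    (hμs : μ s = 0) : ∀ᵐ x ∂μ, ∀ n, iterK P n x s = 0 := by
  refine ae_all_iff.mpr fun n => ?_
  have hint : ∫⁻ x, iterK P n x s ∂μ = 0 := by
    rw [← Measure.bind_apply hs (iterK P n).aemeasurable, bind_eq_self hinv, hμs]
  exact (lintegral_eq_zero_iff (Kernel.measurable_coe _ hs)).mp hint

end iterK

theorem stmt9_general {X : Type*} [MetricSpace X]
    [MeasurableSpace X] [BorelSpace X]
    (P : Kernel X X)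
    (hirr : ∀ x : X, ∀ G : Set X, IsOpen G → G.Nonempty →
      ∃ n, 1 ≤ n ∧ 0 < iterK P n x G)
    (μ : Measure X) (hμ : μ ≠ 0) (hinv : μ.bind (fun x => P x) = μ) :
    ∀ G : Set X, IsOpen G → G.Nonempty → 0 < μ G := by
  intro G hG hGne
  refine pos_iff_ne_zero.mpr fun hμG => ?_
  have : (ae μ).NeBot := ae_neBot.mpr hμ
  obtain ⟨x, hx⟩ := (iterK.ae_forall_apply_eq_zero hinv hG.measurableSet hμG).exists
  obtain ⟨n, -, hpos⟩ := hirr x G hG hGne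
  exact hpos.ne' (hx n)

/-- a topologically irreducible weak Feller chain on a separable
metric space with a nonzero invariant Borel measure `μ` has `μ` strictly positive
on every nonempty open set. -/
theorem stmt9 {X : Type*} [MetricSpace X] [TopologicalSpace.SeparableSpace X]
    [MeasurableSpace X] [BorelSpace X]
    (P : Kernel X X) [IsMarkovKernel P]
    (hFeller : ∀ f : X →ᵇ ℝ, Continuous fun x => ∫ y, f y ∂(P x))
    (hirr : ∀ x : X, ∀ G : Set X, IsOpen G → G.Nonempty →
      ∃ n, 1 ≤ n ∧ 0 < iterK P n x G)
    (μ : Measure X) (hμ : μ ≠ 0) (hinv : μ.bind (fun x => P x) = μ) :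
    ∀ G : Set X, IsOpen G → G.Nonempty → 0 < μ G :=
  stmt9_general P hirr μ hμ hinv
end

section
/- Let Y be a topologically irreducible, topologically recurrent, weak Feller Markov chain on a metric space X. Then for every x ∈ X and every nonempty open set G ⊂ X, the hitting time of G is finite P_x-a.s.: P_x(∃ n ≥ 1, Y_n ∈ G) = 1. -/
/-!
By the weak Feller property, `y ↦ P_y(τ_G < ∞)` is lower semicontinuous: the probability of
hitting `G` within `k` steps is an increasing limit of continuous functions, built from continuous
approximations of the indicator of `G` by applying the transition operator `k` times. Hence, by
irreducibility, `x` has an open neighbourhood `V` from every point of which `G` is hit with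
probability at least some `γ > 0`. By recurrence the chain returns to `V` infinitely often, and
the Markov property at the first return to `V` after time `n` bounds the probability of never
hitting `G` by `(1 - γ)` times the probability of not hitting `G` up to time `n`. Letting
`n → ∞`, the probability of never hitting `G` is at most `1 - γ` times itself, hence zero.
-/

open MeasureTheory Set BoundedContinuousFunction Filter
open scoped ENNReal Function

lemma MeasurableSpace.sup_eq_generateFrom_image2_inter {α : Type*} (m₁ m₂ : MeasurableSpace α) :
    m₁ ⊔ m₂ =
      generateFrom (image2 (· ∩ ·) {s | MeasurableSet[m₁] s} {t | MeasurableSet[m₂] t}) := by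
  refine le_antisymm (sup_le ?_ ?_) (generateFrom_le ?_)
  · exact fun s hs => measurableSet_generateFrom ⟨s, hs, univ, .univ, inter_univ s⟩
  · exact fun t ht => measurableSet_generateFrom ⟨univ, .univ, t, ht, univ_inter t⟩
  · rintro _ ⟨s, hs, t, ht, rfl⟩
    exact (le_sup_left (b := m₂) s hs).inter (le_sup_right (a := m₁) t ht)

lemma MeasurableSpace.isPiSystem_image2_inter {α : Type*} (m₁ m₂ : MeasurableSpace α) :
    IsPiSystem (image2 (· ∩ ·) {s | MeasurableSet[m₁] s} {t | MeasurableSet[m₂] t}) := by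
  rintro _ ⟨s₁, hs₁, t₁, ht₁, rfl⟩ _ ⟨s₂, hs₂, t₂, ht₂, rfl⟩ -
  exact ⟨s₁ ∩ s₂, hs₁.inter hs₂, t₁ ∩ t₂, ht₁.inter ht₂,
    (inter_inter_inter_comm s₁ t₁ s₂ t₂).symm⟩

namespace MarkovChain

section PathSpace

variable {X : Type*}

def shift (n : ℕ) (ω : ℕ → X) : ℕ → X := fun k => ω (k + n)

def hitEvent (G : Set X) : Set (ℕ → X) := {ω | ∃ n, 1 ≤ n ∧ ω n ∈ G}

def hitWithin (G : Set X) (k : ℕ) : Set (ℕ → X) := {ω | ∃ i < k, ω i ∈ G}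

def firstVisitAfter (V : Set X) (n j : ℕ) : Set (ℕ → X) :=
  {ω | n < j ∧ ω j ∈ V ∧ ∀ i, n < i → i < j → ω i ∉ V}

def avoidsUpTo (G : Set X) (n : ℕ) : Set (ℕ → X) := {ω | ∀ i, 1 ≤ i → i ≤ n → ω i ∉ G}

lemma monotone_hitWithin (G : Set X) : Monotone (hitWithin G) :=
  fun _ _ hkl _ ⟨i, hik, hi⟩ => ⟨i, hik.trans_le hkl, hi⟩

lemma hitWithin_zero (G : Set X) : hitWithin G 0 = ∅ := by
  simp [hitWithin]

lemma hitWithin_succ (G : Set X) (k : ℕ) :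
    hitWithin G (k + 1) = (fun ω => ω 0) ⁻¹' G ∪ shift 1 ⁻¹' hitWithin G k := by
  ext ω
  simp only [hitWithin, mem_union, mem_preimage, mem_ofPred_eq, shift]
  constructor
  · rintro ⟨_ | i, hi, hiG⟩
    exacts [Or.inl hiG, Or.inr ⟨i, by omega, hiG⟩]
  · rintro (h | ⟨i, hi, hiG⟩)
    exacts [⟨0, by omega, h⟩, ⟨i + 1, by omega, hiG⟩]

lemma hitEvent_eq_iUnion (G : Set X) : hitEvent G = ⋃ k, shift 1 ⁻¹' hitWithin G k := by
  ext ω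
  simp only [hitEvent, hitWithin, mem_iUnion, mem_preimage, mem_ofPred_eq, shift]
  constructor
  · rintro ⟨_ | i, hi, hiG⟩
    exacts [absurd hi (by omega), ⟨i + 1, i, by omega, hiG⟩]
  · rintro ⟨k, i, -, hiG⟩
    exact ⟨i + 1, by omega, hiG⟩

lemma pairwise_disjoint_firstVisitAfter (V : Set X) (n : ℕ) :
    Pairwise (Disjoint on firstVisitAfter V n) := by
  intro j k hjk
  refine disjoint_left.2 fun ω ⟨hnj, hj, hbj⟩ ⟨hnk, hk, hbk⟩ => ?_
  rcases hjk.lt_or_gt with h | h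
  exacts [hbk j hnj h hj, hbj k hnk h hk]

lemma antitone_avoidsUpTo (G : Set X) : Antitone (avoidsUpTo G) :=
  fun _ _ hmn _ hω i hi hin => hω i hi (hin.trans hmn)

lemma iInter_avoidsUpTo (G : Set X) : ⋂ n, avoidsUpTo G n = (hitEvent G)ᶜ := by
  ext ω
  simp only [avoidsUpTo, hitEvent, mem_iInter, mem_ofPred_eq, mem_compl_iff, not_exists, not_and]
  exact ⟨fun h i hi => h i i hi le_rfl, fun h _ i hi _ => h i hi⟩

variable [MeasurableSpace X]

lemma measurable_shift (n : ℕ) : Measurable (shift (X := X) n) :=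
  measurable_pi_lambda _ fun k => measurable_pi_apply (k + n)

lemma measurableSet_hitEvent {G : Set X} (hG : MeasurableSet G) : MeasurableSet (hitEvent G) :=
  measurableSet_setOfPred.2 <| .exists fun n =>
    measurable_const.and (hG.mem.comp (measurable_pi_apply n))

lemma measurableSet_hitWithin {G : Set X} (hG : MeasurableSet G) (k : ℕ) :
    MeasurableSet (hitWithin G k) :=
  measurableSet_setOfPred.2 <| .exists fun i =>
    measurable_const.and (hG.mem.comp (measurable_pi_apply i))

abbrev pathFiltration (n : ℕ) : MeasurableSpace (ℕ → X) :=
  ⨆ i ≤ n, MeasurableSpace.comap (fun ω => ω i) ‹_›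

lemma pathFiltration_le (n : ℕ) : pathFiltration (X := X) n ≤ MeasurableSpace.pi :=
  iSup₂_le fun i _ => (measurable_pi_apply i).comap_le

lemma measurable_pathFiltration_apply {i n : ℕ} (hi : i ≤ n) :
    Measurable[pathFiltration n] fun ω : ℕ → X => ω i :=
  Measurable.of_comap_le (le_iSup₂ (f := fun i (_ : i ≤ n) =>
    MeasurableSpace.comap (fun ω : ℕ → X => ω i) ‹MeasurableSpace X›) i hi)

lemma pathFiltration_zero :
    pathFiltration (X := X) 0 = MeasurableSpace.comap (fun ω => ω 0) ‹_› := by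
  simp [pathFiltration]

lemma pathFiltration_succ (n : ℕ) :
    pathFiltration (X := X) (n + 1) =
      MeasurableSpace.comap (fun ω => ω 0) ‹_› ⊔ (pathFiltration n).comap (shift 1) := by
  simp only [pathFiltration, Nat.iSup_le_succ', MeasurableSpace.comap_iSup,
    MeasurableSpace.comap_comp]
  rfl

lemma measurableSet_firstVisitAfter {V : Set X} (hV : MeasurableSet V) (n j : ℕ) :
    MeasurableSet[pathFiltration j] (firstVisitAfter V n j) := by
  by_cases hj : n < j
  · simp only [firstVisitAfter, hj, true_and, ofPred_and, ofPred_forall]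
    exact (measurable_pathFiltration_apply le_rfl hV).inter
      (.iInter fun i => .iInter fun _ => .iInter fun (hij : i < j) =>
        measurable_pathFiltration_apply hij.le hV.compl)
  · simp [firstVisitAfter, hj]

lemma measurableSet_avoidsUpTo {G : Set X} (hG : MeasurableSet G) {n j : ℕ} (hnj : n ≤ j) :
    MeasurableSet[pathFiltration j] (avoidsUpTo G n) := by
  simp only [avoidsUpTo, ofPred_forall]
  exact .iInter fun i => .iInter fun _ => .iInter fun (hin : i ≤ n) =>
    measurable_pathFiltration_apply (hin.trans hnj) hG.compl

end PathSpace

section Feller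

variable {X : Type*} [TopologicalSpace X]

def IsWeakFeller [MeasurableSpace X] (κ : X → Measure X) : Prop :=
  ∀ f : X →ᵇ ℝ, Continuous fun x => ∫ y, f y ∂κ x

def IsMonotoneSupOfBCF (f : X → ℝ≥0∞) : Prop :=
  ∃ g : ℕ → X →ᵇ ℝ, Monotone g ∧ (∀ m, 0 ≤ g m) ∧
    ∀ x, f x = ⨆ m, ENNReal.ofReal (g m x)

lemma isMonotoneSupOfBCF_zero : IsMonotoneSupOfBCF (0 : X → ℝ≥0∞) :=
  ⟨0, monotone_const, fun _ => le_rfl, fun _ => by simp⟩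

namespace IsMonotoneSupOfBCF

variable {f h : X → ℝ≥0∞}

lemma lowerSemicontinuous (hf : IsMonotoneSupOfBCF f) : LowerSemicontinuous f := by
  obtain ⟨g, -, -, hfg⟩ := hf
  rw [funext hfg]
  exact lowerSemicontinuous_iSup fun m =>
    (ENNReal.continuous_ofReal.comp (g m).continuous).lowerSemicontinuous

lemma max (hf : IsMonotoneSupOfBCF f) (hh : IsMonotoneSupOfBCF h) :
    IsMonotoneSupOfBCF fun x => max (f x) (h x) := by
  obtain ⟨g, hgm, hg0, hfg⟩ := hf
  obtain ⟨g', hgm', hg0', hhg'⟩ := hh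
  refine ⟨fun m => g m ⊔ g' m, hgm.sup hgm', fun m => le_sup_of_le_left (hg0 m), fun x => ?_⟩
  simp only [hfg, hhg', coe_sup, Pi.sup_apply, ENNReal.ofReal_max, ← iSup_sup_eq]

lemma lintegral [MeasurableSpace X] [OpensMeasurableSpace X] {κ : X → Measure X}
    [∀ x, IsProbabilityMeasure (κ x)]
    (hκ : IsWeakFeller κ) (hf : IsMonotoneSupOfBCF f) :
    IsMonotoneSupOfBCF fun x => ∫⁻ y, f y ∂κ x := by
  obtain ⟨g, hgm, hg0, hfg⟩ := hf
  refine ⟨fun m => ofNormedAddCommGroup (fun x => ∫ y, g m y ∂κ x) (hκ (g m)) ‖g m‖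
      fun x => (g m).norm_integral_le_norm (κ x),
    fun m m' hmm' x => integral_mono ((g m).integrable _) ((g m').integrable _) (hgm hmm'),
    fun m x => integral_nonneg (hg0 m), fun x => ?_⟩
  simp only [hfg, coe_ofNormedAddCommGroup]
  rw [lintegral_iSup (f := fun m y => ENNReal.ofReal (g m y))
    (fun m => (ENNReal.continuous_ofReal.comp (g m).continuous).measurable)
    fun m m' hmm' y => ENNReal.ofReal_le_ofReal (hgm hmm' y)]
  congr with m
  exact (ofReal_integral_eq_lintegral_ofReal ((g m).integrable _) (ae_of_all _ (hg0 m))).symm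

end IsMonotoneSupOfBCF

end Feller

lemma isMonotoneSupOfBCF_indicator {X : Type*} [PseudoMetricSpace X] {G : Set X} (hG : IsOpen G) :
    IsMonotoneSupOfBCF (G.indicator 1) := by
  by_cases hGu : G = univ
  · subst hGu
    exact ⟨fun _ => const X 1, monotone_const, fun _ _ => zero_le_one, fun x => by simp⟩
  have hGc : Gᶜ.Nonempty := nonempty_compl.2 hGu
  have hd : ∀ x, 0 ≤ Metric.infDist x Gᶜ := fun x => Metric.infDist_nonneg
  refine ⟨fun m => ofNormedAddCommGroup (fun x => min 1 (m * Metric.infDist x Gᶜ))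
      (continuous_const.min (continuous_const.mul (Metric.continuous_infDist_pt _))) 1
      fun x => by
        rw [Real.norm_of_nonneg (le_min zero_le_one (mul_nonneg m.cast_nonneg (hd x)))]
        exact min_le_left _ _,
    fun m m' hmm' x => min_le_min_left _ (mul_le_mul_of_nonneg_right (Nat.cast_le.2 hmm') (hd x)),
    fun m x => le_min zero_le_one (mul_nonneg m.cast_nonneg (hd x)), fun x => ?_⟩
  simp only [coe_ofNormedAddCommGroup]
  by_cases hx : x ∈ G
  · have hpos : 0 < Metric.infDist x Gᶜ :=
      (hG.isClosed_compl.notMem_iff_infDist_pos hGc).1 (not_not_intro hx)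
    obtain ⟨m, hm⟩ := exists_nat_ge (Metric.infDist x Gᶜ)⁻¹
    refine le_antisymm ?_ (iSup_le fun k => ?_)
    · refine le_iSup_of_le m ?_
      rw [indicator_of_mem hx, Pi.one_apply, min_eq_left, ENNReal.ofReal_one]
      rwa [← inv_le_iff_one_le_mul₀ hpos]
    · rw [indicator_of_mem hx, Pi.one_apply, ← ENNReal.ofReal_one]
      exact ENNReal.ofReal_le_ofReal (min_le_left _ _)
  · simp [indicator_of_notMem hx, Metric.infDist_zero_of_mem (mem_compl hx)]

section Markov

variable {X : Type*} [MeasurableSpace X]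

noncomputable def transition (P : X → Measure (ℕ → X)) (x : X) : Measure X :=
  (P x).map fun ω => ω 1

instance (P : X → Measure (ℕ → X)) [∀ x, IsProbabilityMeasure (P x)] (x : X) :
    IsProbabilityMeasure (transition P x) :=
  Measure.isProbabilityMeasure_map (measurable_pi_apply 1).aemeasurable

/-- `P x` is the law of a time-homogeneous Markov chain started at `x`. -/
structure IsMarkovFamily (P : X → Measure (ℕ → X)) : Prop where
  measurable_apply : ∀ B : Set (ℕ → X), MeasurableSet B → Measurable fun x => P x B
  start : ∀ x, P x {ω | ω 0 = x} = 1
  markov : ∀ x, ∀ B : Set (ℕ → X), MeasurableSet B →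
    P x (shift 1 ⁻¹' B) = ∫⁻ y, P y B ∂transition P x

namespace IsMarkovFamily

variable {P : X → Measure (ℕ → X)} (hP : IsMarkovFamily P)
include hP

lemma measurable : Measurable P :=
  Measure.measurable_of_measurable_coe P hP.measurable_apply

lemma map_shift (x : X) : (P x).map (shift 1) = (transition P x).bind P :=
  Measure.ext fun B hB => by
    rw [Measure.map_apply (measurable_shift 1) hB,
      Measure.bind_apply hB hP.measurable.aemeasurable, hP.markov x B hB]

lemma lintegral_comp_shift (x : X) {f : (ℕ → X) → ℝ≥0∞} (hf : Measurable f) :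
    ∫⁻ ω, f (shift 1 ω) ∂P x = ∫⁻ y, ∫⁻ ω, f ω ∂P y ∂transition P x := by
  rw [← lintegral_map hf (measurable_shift 1), hP.map_shift,
    Measure.lintegral_bind hP.measurable.aemeasurable hf.aemeasurable]

section Probability

variable [MeasurableSingletonClass X] [∀ x, IsProbabilityMeasure (P x)]

lemma ae_start (x : X) : ∀ᵐ ω ∂P x, ω 0 = x :=
  (mem_ae_iff_prob_eq_one (s := {ω : ℕ → X | ω 0 = x})
    ((measurableSet_singleton x).preimage (measurable_pi_apply 0))).2 (hP.start x)

lemma restrict_start_mem_inter (x : X) (A : Set X) (W : Set (ℕ → X)) :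
    (P x).restrict ((fun ω => ω 0) ⁻¹' A ∩ W) =
      A.indicator (fun _ => (P x).restrict W) x := by
  by_cases hx : x ∈ A
  · rw [indicator_of_mem hx]
    refine Measure.restrict_congr_set (eventuallyEq_set.2 ?_)
    filter_upwards [hP.ae_start x] with ω hω
    simp [hω, hx]
  · rw [indicator_of_notMem hx, ← Measure.restrict_empty]
    refine Measure.restrict_congr_set (eventuallyEq_set.2 ?_)
    filter_upwards [hP.ae_start x] with ω hω
    simp [hω, hx]

lemma measure_start_mem_union (x : X) (A : Set X) (W : Set (ℕ → X)) :
    P x ((fun ω => ω 0) ⁻¹' A ∪ W) = max (A.indicator 1 x) (P x W) := by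
  by_cases hx : x ∈ A
  · rw [indicator_of_mem hx, Pi.one_apply, max_eq_left prob_le_one, ← measure_univ (μ := P x)]
    refine measure_congr (eventuallyEq_set.2 ?_)
    filter_upwards [hP.ae_start x] with ω hω
    simp [hω, hx]
  · rw [indicator_of_notMem hx, max_eq_right zero_le]
    refine measure_congr (eventuallyEq_set.2 ?_)
    filter_upwards [hP.ae_start x] with ω hω
    simp [hω, hx]

lemma markov_property_succ_generator {n : ℕ} {A : Set X} {S B : Set (ℕ → X)}
    (hS : MeasurableSet S) (hB : MeasurableSet B)
    (h : ∀ y, P y (S ∩ shift n ⁻¹' B) = ∫⁻ ω in S, P (ω n) B ∂P y) (x : X) :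
    P x ((fun ω => ω 0) ⁻¹' A ∩ shift 1 ⁻¹' S ∩ shift (n + 1) ⁻¹' B) =
      ∫⁻ ω in (fun ω => ω 0) ⁻¹' A ∩ shift 1 ⁻¹' S, P (ω (n + 1)) B ∂P x := by
  rw [inter_assoc, ← Measure.restrict_apply_univ, hP.restrict_start_mem_inter,
    hP.restrict_start_mem_inter]
  by_cases hx : x ∈ A
  swap
  · simp [indicator_of_notMem hx]
  simp only [indicator_of_mem hx, Measure.restrict_apply_univ]
  have hg : Measurable fun ω : ℕ → X => P (ω n) B :=
    (hP.measurable_apply B hB).comp (measurable_pi_apply n)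
  calc P x (shift 1 ⁻¹' S ∩ shift (n + 1) ⁻¹' B)
      = P x (shift 1 ⁻¹' (S ∩ shift n ⁻¹' B)) := rfl
    _ = ∫⁻ y, ∫⁻ ω in S, P (ω n) B ∂P y ∂transition P x := by
      rw [hP.markov x _ (hS.inter (measurable_shift n hB))]
      simp_rw [h]
    _ = ∫⁻ ω in shift 1 ⁻¹' S, P (ω (n + 1)) B ∂P x := by
      simp_rw [← lintegral_indicator hS, ← hP.lintegral_comp_shift x (hg.indicator hS),
        ← lintegral_indicator (measurable_shift 1 hS)]
      rfl

theorem markov_property (n : ℕ) (x : X) {S : Set (ℕ → X)}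
    (hS : MeasurableSet[pathFiltration n] S)
    {B : Set (ℕ → X)} (hB : MeasurableSet B) :
    P x (S ∩ shift n ⁻¹' B) = ∫⁻ ω in S, P (ω n) B ∂P x := by
  induction n generalizing x S with
  | zero =>
    rw [pathFiltration_zero] at hS
    obtain ⟨A, -, rfl⟩ := hS
    have hstart := hP.restrict_start_mem_inter x A univ
    rw [inter_univ] at hstart
    rw [inter_comm, ← Measure.restrict_apply (measurable_shift 0 hB), hstart]
    by_cases hx : x ∈ A
    · rw [indicator_of_mem hx, Measure.restrict_univ,
        lintegral_congr_ae ((hP.ae_start x).mono fun ω hω => by rw [hω]), lintegral_const,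
        measure_univ, mul_one]
      rfl
    · simp [indicator_of_notMem hx]
  | succ n ih =>
    have hSm : MeasurableSet S := pathFiltration_le _ S hS
    rw [← Measure.restrict_apply hSm, ← withDensity_apply _ hSm]
    have hbasic : ∀ s ∈ image2 (· ∩ ·) {s | MeasurableSet[.comap (fun ω => ω 0) ‹_›] s}
        {t | MeasurableSet[(pathFiltration n).comap (shift 1)] t},
        (P x).restrict (shift (n + 1) ⁻¹' B) s =
          (P x).withDensity (fun ω => P (ω (n + 1)) B) s := by
      rintro _ ⟨_, ⟨A, hA, rfl⟩, _, ⟨S', hS', rfl⟩, rfl⟩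
      have hS'm : MeasurableSet S' := pathFiltration_le n S' hS'
      rw [Measure.restrict_apply' (measurable_shift _ hB),
        withDensity_apply _ ((measurable_pi_apply 0 hA).inter (measurable_shift 1 hS'm))]
      exact hP.markov_property_succ_generator hS'm hB (fun y => ih y hS') x
    refine ext_on_measurableSpace_of_generate_finite _ _ hbasic (pathFiltration_le (n + 1))
      ((pathFiltration_succ n).trans (MeasurableSpace.sup_eq_generateFrom_image2_inter _ _))
      (MeasurableSpace.isPiSystem_image2_inter _ _) ?_ hS
    exact hbasic univ ⟨univ, by simp, univ, by simp, inter_univ univ⟩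

lemma ae_shift_mem_of_measure_eq_one (n : ℕ) (x : X) {A : Set X} {D : Set (ℕ → X)}
    (hA : MeasurableSet A) (hD : MeasurableSet D) (h : ∀ y ∈ A, P y D = 1) :
    ∀ᵐ ω ∂P x, ω n ∈ A → shift n ω ∈ D := by
  have hbad : {ω | ¬(ω n ∈ A → shift n ω ∈ D)} =
      (fun ω => ω n) ⁻¹' A ∩ shift n ⁻¹' Dᶜ := by
    ext ω; simp
  rw [ae_iff, hbad, hP.markov_property n x (measurable_pathFiltration_apply le_rfl hA) hD.compl,
    setLIntegral_congr_fun (measurable_pi_apply n hA)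
      (g := fun _ => 0) fun ω hω => (prob_compl_eq_zero_iff hD).2 (h _ hω)]
  exact lintegral_zero

lemma ae_frequently_mem {V : Set X} (hV : MeasurableSet V)
    (hrec : ∀ y ∈ V, P y (hitEvent V) = 1) {x : X} (hx : x ∈ V) :
    ∀ᵐ ω ∂P x, ∃ᶠ j in atTop, ω j ∈ V := by
  simp_rw [frequently_atTop]
  rw [ae_all_iff]
  intro n
  induction n with
  | zero =>
    filter_upwards [(mem_ae_iff_prob_eq_one (measurableSet_hitEvent hV)).2 (hrec x hx)]
      with ω ⟨j, _, hj⟩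
    exact ⟨j, Nat.zero_le j, hj⟩
  | succ n ih =>
    filter_upwards [ih, hP.ae_shift_mem_of_measure_eq_one n x hV (measurableSet_hitEvent hV) hrec]
      with ω ⟨j, hnj, hj⟩ hshift
    rcases hnj.eq_or_lt with rfl | hlt
    · obtain ⟨i, hi, hiV⟩ := hshift hj
      exact ⟨i + n, by omega, hiV⟩
    · exact ⟨j, hlt, hj⟩

/-- Decompose the paths avoiding `G` according to their first visit to `V` after time `n`; by the
Markov property at that time, the rest of the path avoids `G` with probability at most `c`. -/
lemma measure_compl_hitEvent_le {V G : Set X} (hV : MeasurableSet V) (hG : MeasurableSet G)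
    {c : ℝ≥0∞} (hc : ∀ y ∈ V, P y (hitEvent G)ᶜ ≤ c) (x : X) (n : ℕ)
    (hvisit : ∀ᵐ ω ∂P x, ∃ j, n < j ∧ ω j ∈ V) :
    P x (hitEvent G)ᶜ ≤ c * P x (avoidsUpTo G n) := by
  set N := (hitEvent G)ᶜ
  set E : ℕ → Set (ℕ → X) := fun j => firstVisitAfter V n j ∩ avoidsUpTo G n
  have hE : ∀ j, MeasurableSet[pathFiltration j] (E j) := fun j => by
    by_cases hj : n < j
    · exact (measurableSet_firstVisitAfter hV n j).inter (measurableSet_avoidsUpTo hG hj.le)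
    · simp [E, firstVisitAfter, hj]
  have hcover : N ≤ᵐ[P x] ⋃ j, E j ∩ shift j ⁻¹' N := by
    filter_upwards [hvisit] with ω hω hωN
    classical
    have hωN' : ∀ i, 1 ≤ i → ω i ∉ G := fun i hi hiG => hωN ⟨i, hi, hiG⟩
    refine mem_iUnion.2 ⟨Nat.find hω, ⟨⟨(Nat.find_spec hω).1, (Nat.find_spec hω).2,
      fun i hni hij hiV => Nat.find_min hω hij ⟨hni, hiV⟩⟩, fun i hi _ => hωN' i hi⟩, ?_⟩
    rintro ⟨i, hi, hiG⟩
    exact hωN' _ (by omega) hiG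
  calc P x N ≤ P x (⋃ j, E j ∩ shift j ⁻¹' N) := measure_mono_ae hcover
    _ ≤ ∑' j, P x (E j ∩ shift j ⁻¹' N) := measure_iUnion_le _
    _ = ∑' j, ∫⁻ ω in E j, P (ω j) N ∂P x := by
      congr with j
      exact hP.markov_property j x (hE j) (measurableSet_hitEvent hG).compl
    _ ≤ ∑' j, c * P x (E j) := by
      gcongr with j
      exact (setLIntegral_mono measurable_const fun ω hω => hc _ hω.1.2.1).trans_eq
        (setLIntegral_const _ _)
    _ = c * P x (⋃ j, E j) := by
      rw [ENNReal.tsum_mul_left, measure_iUnion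
        (fun j k hjk => (pairwise_disjoint_firstVisitAfter V n hjk).mono inter_subset_left
          inter_subset_left)
        fun j => pathFiltration_le j _ (hE j)]
    _ ≤ c * P x (avoidsUpTo G n) := by
      gcongr
      exact iUnion_subset fun j => inter_subset_right

lemma measure_hitEvent_eq_one {V G : Set X} (hV : MeasurableSet V) (hG : MeasurableSet G)
    {c : ℝ≥0∞} (hc1 : c < 1) (hc : ∀ y ∈ V, P y (hitEvent G)ᶜ ≤ c) {x : X}
    (hio : ∀ᵐ ω ∂P x, ∃ᶠ j in atTop, ω j ∈ V) :
    P x (hitEvent G) = 1 := by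
  have hle : P x (hitEvent G)ᶜ ≤ P x (hitEvent G)ᶜ * c :=
    calc P x (hitEvent G)ᶜ ≤ ⨅ n, c * P x (avoidsUpTo G n) := le_iInf fun n =>
          hP.measure_compl_hitEvent_le hV hG hc x n <| by
            filter_upwards [hio] with ω hω
            exact frequently_atTop.1 hω (n + 1)
      _ = c * ⨅ n, P x (avoidsUpTo G n) := (ENNReal.mul_iInf fun h => absurd h hc1.ne_top).symm
      _ = P x (hitEvent G)ᶜ * c := by
        rw [← iInter_avoidsUpTo, (antitone_avoidsUpTo G).measure_iInter
          (fun n => (pathFiltration_le n _ (measurableSet_avoidsUpTo hG le_rfl)).nullMeasurableSet)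
          ⟨0, measure_ne_top _ _⟩, mul_comm]
  have hzero : P x (hitEvent G)ᶜ = 0 := by
    by_contra hne
    have := ENNReal.mul_lt_mul_right hne (measure_ne_top _ _) hc1
    rw [mul_one] at this
    exact (hle.trans_lt this).false
  exact (prob_compl_eq_zero_iff (measurableSet_hitEvent hG)).1 hzero

end Probability

end IsMarkovFamily

end Markov

namespace IsMarkovFamily

variable {X : Type*} [MetricSpace X] [MeasurableSpace X] [BorelSpace X]
  {P : X → Measure (ℕ → X)} [∀ x, IsProbabilityMeasure (P x)] (hP : IsMarkovFamily P)
include hP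

/-- `P y (shift 1 ⁻¹' hitWithin G (k + 1))` is obtained from that for `k` by taking the pointwise
maximum with the indicator of `G` and applying the transition operator, and both operations
preserve monotone limits of bounded continuous functions. -/
lemma isMonotoneSupOfBCF_measure_hitWithin (hF : IsWeakFeller (transition P)) {G : Set X}
    (hG : IsOpen G) (k : ℕ) :
    IsMonotoneSupOfBCF fun y => P y (shift 1 ⁻¹' hitWithin G k) := by
  induction k with
  | zero =>
    simp only [hitWithin_zero, preimage_empty, measure_empty]
    exact isMonotoneSupOfBCF_zero
  | succ k ih =>
    have hstep : (fun y => P y (shift 1 ⁻¹' hitWithin G (k + 1))) = fun y =>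
        ∫⁻ z, max (G.indicator 1 z) (P z (shift 1 ⁻¹' hitWithin G k)) ∂transition P y := by
      funext y
      simp_rw [hP.markov y _ (measurableSet_hitWithin hG.measurableSet (k + 1)), hitWithin_succ,
        hP.measure_start_mem_union]
    rw [hstep]
    exact ((isMonotoneSupOfBCF_indicator hG).max ih).lintegral hF

lemma lowerSemicontinuous_measure_hitEvent (hF : IsWeakFeller (transition P)) {G : Set X}
    (hG : IsOpen G) : LowerSemicontinuous fun y => P y (hitEvent G) := by
  simp_rw [hitEvent_eq_iUnion,
    Monotone.measure_iUnion fun _ _ hkl => preimage_mono (monotone_hitWithin G hkl)]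
  exact lowerSemicontinuous_iSup fun k =>
    (hP.isMonotoneSupOfBCF_measure_hitWithin hF hG k).lowerSemicontinuous

end IsMarkovFamily

end MarkovChain

open MarkovChain

/-- for a topologically irreducible, topologically recurrent,
weak Feller Markov chain, every nonempty open set is hit a.s. from every
starting point. -/
theorem stmt10 {X : Type*} [MetricSpace X] [MeasurableSpace X] [BorelSpace X]
    (P : X → Measure (ℕ → X)) [∀ x, IsProbabilityMeasure (P x)]
    (hmeas : ∀ B : Set (ℕ → X), MeasurableSet B → Measurable fun x => P x B)
    (hstart : ∀ x, P x {ω | ω 0 = x} = 1)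
    (hMarkov : ∀ x, ∀ B : Set (ℕ → X), MeasurableSet B →
      P x ((fun ω n => ω (n + 1)) ⁻¹' B) = ∫⁻ y, P y B ∂((P x).map fun ω => ω 1))
    (hFeller : ∀ f : X →ᵇ ℝ, Continuous fun x => ∫ y, f y ∂((P x).map fun ω => ω 1))
    (hirr : ∀ x : X, ∀ G : Set X, IsOpen G → G.Nonempty →
      0 < P x {ω | ∃ n, 1 ≤ n ∧ ω n ∈ G})
    (hrec : ∀ G : Set X, IsOpen G → G.Nonempty → ∀ x ∈ G,
      P x {ω | ∃ n, 1 ≤ n ∧ ω n ∈ G} = 1) :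
    ∀ x : X, ∀ G : Set X, IsOpen G → G.Nonempty →
      P x {ω | ∃ n, 1 ≤ n ∧ ω n ∈ G} = 1 := by
  intro x G hGo hGne
  have hP : IsMarkovFamily P := ⟨hmeas, hstart, hMarkov⟩
  have hG : MeasurableSet G := hGo.measurableSet
  obtain ⟨γ, hγ0, hγx⟩ := exists_between (hirr x G hGo hGne)
  set V := (fun y => P y (hitEvent G)) ⁻¹' Ioi γ
  have hVo : IsOpen V := (hP.lowerSemicontinuous_measure_hitEvent hFeller hGo).isOpen_preimage γ
  have hxV : x ∈ V := hγx
  have hc : ∀ y ∈ V, P y (hitEvent G)ᶜ ≤ 1 - γ := fun y hy =>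
    (prob_compl_eq_one_sub (measurableSet_hitEvent hG)).trans_le (tsub_le_tsub_left hy.le 1)
  exact hP.measure_hitEvent_eq_one hVo.measurableSet hG
    (ENNReal.sub_lt_self ENNReal.one_ne_top one_ne_zero hγ0.ne') hc
    (hP.ae_frequently_mem hVo.measurableSet (hrec V hVo ⟨x, hxV⟩) hxV)
end

section
/- Let S be a random walk on ℝ^d with i.i.d. increments such that, started at 0, the ladder walk H (defined by H_0 = 0 and H_n = S_{τ_n} where τ_n is the first time all coordinates strictly exceed those of H_{n−1}) is well-defined with a.s. finite steps. Then for every x ∈ ℝ^d, the hitting time of the shifted open orthant x + (0,∞)^d by S is a.s. finite: P_0(∃ n ≥ 1, S_n ∈ x + (0,∞)^d) = 1, given P_0(τ_{(0,∞)^d} < ∞) = 1. -/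
/-!
Let `a t` be the probability that the walk eventually lies strictly above level `t` in every
coordinate, so `a 0 = 1`. Split according to the first entrance time `m` into the open orthant
and according to whether at that time every coordinate already exceeds some `η > 0`, which
happens with probability `q > 0` for a suitable `η`. The increments after time `m` are
independent of the past and distributed as the original ones, whence
`a t ≥ q * a (t - η) + (1 - q) * a t`. So `a (t - η) = 1` forces `a t = 1`, and induction on
`t / η` gives `a t = 1` for every `t`.
-/

open MeasureTheory ProbabilityTheory
open scoped ENNReal

lemma ENNReal.eq_one_of_add_mul_le {q s a : ℝ≥0∞} (hq : q ≠ 0) (hqs : q + s = 1)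
    (ha : a ≤ 1) (h : q + s * a ≤ a) : a = 1 := by
  have hq_top : q ≠ ∞ := ne_top_of_le_ne_top ENNReal.one_ne_top (hqs ▸ le_self_add)
  have hsa_top : s * a ≠ ∞ := ENNReal.mul_ne_top
    (ne_top_of_le_ne_top ENNReal.one_ne_top (hqs ▸ le_add_self))
    (ne_top_of_le_ne_top ENNReal.one_ne_top ha)
  have hqa : q * 1 ≤ q * a := by
    rw [mul_one, ← ENNReal.add_le_add_iff_right hsa_top]
    calc q + s * a ≤ a := h
      _ = q * a + s * a := by rw [← add_mul, hqs, one_mul]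
  exact le_antisymm ha ((ENNReal.mul_le_mul_iff_right hq hq_top).1 hqa)

namespace OrthantHitting

section Shift

variable {Ω E : Type*} [MeasurableSpace E] {X : ℕ → Ω → E}

abbrev past (X : ℕ → Ω → E) (m : ℕ) : MeasurableSpace Ω :=
  ⨆ i ∈ Set.Iio m, MeasurableSpace.comap (X i) inferInstance

-- Indexed as `n + m` so that `shifted X 0 ω` is definitionally `fun n => X n ω`.
def shifted (X : ℕ → Ω → E) (m : ℕ) (ω : Ω) : ℕ → E := fun n => X (n + m) ω

lemma measurable_past {m i : ℕ} (hi : i < m) : Measurable[past X m] (X i) :=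
  measurable_iff_comap_le.2 <|
    le_iSup₂ (f := fun j (_ : j ∈ Set.Iio m) => MeasurableSpace.comap (X j) inferInstance) i hi

variable [MeasurableSpace Ω] {P : Measure Ω}

lemma measurable_shifted (hX : ∀ i, Measurable (X i)) (m : ℕ) : Measurable (shifted X m) :=
  measurable_pi_lambda _ fun n => hX (n + m)

lemma past_le (hX : ∀ i, Measurable (X i)) (m : ℕ) : past X m ≤ ‹MeasurableSpace Ω› :=
  iSup₂_le fun i _ => (hX i).comap_le

lemma map_shifted (hX : ∀ i, Measurable (X i)) (hindep : iIndepFun X P)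
    (hident : ∀ i, P.map (X i) = P.map (X 0)) (m : ℕ) :
    P.map (shifted X m) = P.map (shifted X 0) := by
  have hlaw : ∀ m, P.map (shifted X m) = Measure.infinitePi fun _ => P.map (X 0) := fun m => by
    rw [← funext fun n => hident (n + m)]
    exact (hindep.precomp (add_left_injective m)).map_fun_eq_infinitePi_map fun n => hX _
  rw [hlaw, hlaw]

lemma indep_past_shifted (hX : ∀ i, Measurable (X i)) (hindep : iIndepFun X P) (m : ℕ) :
    Indep (past X m) (MeasurableSpace.comap (shifted X m) inferInstance) P := by
  refine indep_of_indep_of_le_right (indep_iSup_of_disjoint (fun i => (hX i).comap_le)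
    hindep.iIndep (Set.Iio_disjoint_Ici le_rfl)) ?_
  rw [MeasurableSpace.pi, MeasurableSpace.comap_iSup]
  refine iSup_le fun n => ?_
  rw [MeasurableSpace.comap_comp]
  exact le_iSup₂ (f := fun j (_ : j ∈ Set.Ici m) => MeasurableSpace.comap (X j) inferInstance)
    (n + m) (Nat.le_add_left m n)

lemma measure_inter_shifted_preimage [IsProbabilityMeasure P] (hX : ∀ i, Measurable (X i))
    (hindep : iIndepFun X P) (hident : ∀ i, P.map (X i) = P.map (X 0)) {m : ℕ} {F : Set Ω}
    (hF : MeasurableSet[past X m] F) {C : Set (ℕ → E)} (hC : MeasurableSet C) :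
    P (F ∩ shifted X m ⁻¹' C) = P F * P (shifted X 0 ⁻¹' C) := by
  rw [(Indep_iff _ _ _).1 (indep_past_shifted hX hindep m) F _ hF ⟨C, hC, rfl⟩,
    ← Measure.map_apply (measurable_shifted hX m) hC, map_shifted hX hindep hident m,
    Measure.map_apply (measurable_shifted hX 0) hC]

lemma measure_iUnion_inter_shifted_preimage [IsProbabilityMeasure P]
    (hX : ∀ i, Measurable (X i)) (hindep : iIndepFun X P)
    (hident : ∀ i, P.map (X i) = P.map (X 0)) {F : ℕ → Set Ω}
    (hFd : Pairwise (Function.onFun Disjoint F)) (hF : ∀ m, MeasurableSet[past X m] (F m))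
    {C : Set (ℕ → E)} (hC : MeasurableSet C) :
    P (⋃ m, F m ∩ shifted X m ⁻¹' C) = P (⋃ m, F m) * P (shifted X 0 ⁻¹' C) := by
  have hFmeas : ∀ m, MeasurableSet (F m) := fun m => past_le hX m _ (hF m)
  rw [measure_iUnion (fun _ _ hmn => (hFd hmn).mono Set.inter_subset_left
      Set.inter_subset_left) fun m => (hFmeas m).inter (measurable_shifted hX m hC),
    measure_iUnion hFd hFmeas, ← ENNReal.tsum_mul_right]
  exact tsum_congr fun m => measure_inter_shifted_preimage hX hindep hident (hF m) hC

end Shift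

section Walk

variable {ι : Type*}

def walk (y : ℕ → ι → ℝ) (n : ℕ) : ι → ℝ := ∑ j ∈ Finset.range n, y j

def aboveAt (t : ℝ) (n : ℕ) : Set (ℕ → ι → ℝ) :=
  {y | 1 ≤ n ∧ ∀ i, t < walk y n i}

def everAbove (t : ℝ) : Set (ℕ → ι → ℝ) := ⋃ n, aboveAt t n

lemma everAbove_anti {t t' : ℝ} (htt' : t ≤ t') : everAbove t' ⊆ everAbove (ι := ι) t :=
  Set.iUnion_mono fun _ _ ⟨hn, hy⟩ => ⟨hn, fun i => htt'.trans_lt (hy i)⟩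

lemma walk_add (y : ℕ → ι → ℝ) (m k : ℕ) :
    walk y (m + k) = walk y m + walk (fun n => y (n + m)) k := by
  simp only [walk, Finset.sum_range_add, add_comm _ m]

lemma mem_everAbove_of_shift {y : ℕ → ι → ℝ} {m : ℕ} {c t : ℝ}
    (hc : ∀ i, c ≤ walk y m i) (hy : (fun n => y (n + m)) ∈ everAbove (t - c)) :
    y ∈ everAbove t := by
  obtain ⟨k, hk, hyk⟩ := Set.mem_iUnion.1 hy
  refine Set.mem_iUnion.2 ⟨m + k, by omega, fun i => ?_⟩
  rw [walk_add, Pi.add_apply]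
  linarith [hc i, hyk i]

lemma exists_nat_forall_one_div_lt [Finite ι] {v : ι → ℝ} (hv : ∀ i, 0 < v i) :
    ∃ j : ℕ, ∀ i, 1 / ((j : ℝ) + 1) < v i :=
  (Filter.eventually_all.2 fun i =>
    tendsto_one_div_add_atTop_nhds_zero_nat.eventually (gt_mem_nhds (hv i))).exists

variable {Ω : Type*} {X : ℕ → Ω → ι → ℝ}

lemma measurableSet_aboveAt_preimage [Countable ι] {α : Type*} {mα : MeasurableSpace α}
    {f : α → ℕ → ι → ℝ} {n : ℕ} (hf : Measurable fun a => walk (f a) n) (t : ℝ) :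
    MeasurableSet (f ⁻¹' aboveAt t n) := by
  simp only [aboveAt]
  measurability

lemma measurableSet_everAbove [Countable ι] (t : ℝ) :
    MeasurableSet (everAbove t : Set (ℕ → ι → ℝ)) :=
  .iUnion fun _ => measurableSet_aboveAt_preimage (f := id)
    (Finset.measurable_sum _ fun j _ => measurable_pi_apply j) t

lemma measurableSet_aboveAt_preimage_past [Countable ι] {k m : ℕ} (hkm : k ≤ m) (t : ℝ) :
    MeasurableSet[past X m] (shifted X 0 ⁻¹' aboveAt t k) :=
  measurableSet_aboveAt_preimage (Finset.measurable_sum _ fun _ hj =>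
    measurable_past ((Finset.mem_range.1 hj).trans_le hkm)) t

def firstEntry (X : ℕ → Ω → ι → ℝ) : ℕ → Set Ω :=
  disjointed fun k => shifted X 0 ⁻¹' aboveAt 0 k

def deepEntry (X : ℕ → Ω → ι → ℝ) (η : ℝ) (m : ℕ) : Set Ω :=
  firstEntry X m ∩ shifted X 0 ⁻¹' aboveAt η m

def shallowEntry (X : ℕ → Ω → ι → ℝ) (η : ℝ) (m : ℕ) : Set Ω :=
  firstEntry X m \ shifted X 0 ⁻¹' aboveAt η m

lemma iUnion_firstEntry : ⋃ m, firstEntry X m = shifted X 0 ⁻¹' everAbove 0 := by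
  rw [firstEntry, iUnion_disjointed, everAbove, Set.preimage_iUnion]

lemma measurableSet_firstEntry_past [Countable ι] (m : ℕ) :
    MeasurableSet[past X m] (firstEntry X m) := by
  rw [firstEntry, disjointed_eq_inter_compl]
  exact (measurableSet_aboveAt_preimage_past le_rfl 0).inter <|
    .biInter (Set.to_countable _) fun _ hj =>
      (measurableSet_aboveAt_preimage_past (le_of_lt hj) 0).compl

lemma walk_pos_of_mem_firstEntry {m : ℕ} {ω : Ω} (hω : ω ∈ firstEntry X m) :
    ∀ i, 0 < walk (shifted X 0 ω) m i :=
  (disjointed_subset _ m hω).2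

lemma disjoint_iUnion_deepEntry_shallowEntry (η : ℝ) :
    Disjoint (⋃ m, deepEntry X η m) (⋃ m, shallowEntry X η m) := by
  refine Set.disjoint_iUnion_left.2 fun m => Set.disjoint_iUnion_right.2 fun n => ?_
  obtain rfl | hmn := eq_or_ne m n
  · exact Set.disjoint_sdiff_inter.symm
  · exact (disjoint_disjointed _ hmn).mono Set.inter_subset_left Set.sdiff_subset

lemma measurableSet_deepEntry_past [Countable ι] (η : ℝ) (m : ℕ) :
    MeasurableSet[past X m] (deepEntry X η m) :=
  (measurableSet_firstEntry_past m).inter (measurableSet_aboveAt_preimage_past le_rfl η)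

lemma measurableSet_shallowEntry_past [Countable ι] (η : ℝ) (m : ℕ) :
    MeasurableSet[past X m] (shallowEntry X η m) :=
  (measurableSet_firstEntry_past m).diff (measurableSet_aboveAt_preimage_past le_rfl η)

variable [MeasurableSpace Ω] {P : Measure Ω}

lemma measure_iUnion_deepEntry_add_shallowEntry [Countable ι] (hX : ∀ i, Measurable (X i))
    (η : ℝ) :
    P (⋃ m, deepEntry X η m) + P (⋃ m, shallowEntry X η m) = P (⋃ m, firstEntry X m) := by
  rw [← measure_union (disjoint_iUnion_deepEntry_shallowEntry η)
    (.iUnion fun m => past_le hX m _ (measurableSet_shallowEntry_past η m)),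
    ← Set.iUnion_union_distrib]
  simp only [deepEntry, shallowEntry, Set.inter_union_sdiff]

lemma exists_measure_iUnion_deepEntry_ne_zero [Finite ι]
    (h : P (⋃ m, firstEntry X m) ≠ 0) : ∃ η > 0, P (⋃ m, deepEntry X η m) ≠ 0 := by
  obtain ⟨m, hm⟩ : ∃ m, P (firstEntry X m) ≠ 0 := by
    by_contra! hnull
    exact h (measure_iUnion_null hnull)
  have hcover : firstEntry X m ⊆ ⋃ j : ℕ, deepEntry X (1 / ((j : ℝ) + 1)) m := fun ω hω =>
    have ⟨j, hj⟩ := exists_nat_forall_one_div_lt (walk_pos_of_mem_firstEntry hω)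
    Set.mem_iUnion.2 ⟨j, hω, (disjointed_subset _ m hω).1, hj⟩
  obtain ⟨j, hj⟩ : ∃ j : ℕ, P (deepEntry X (1 / ((j : ℝ) + 1)) m) ≠ 0 := by
    by_contra! hnull
    exact hm (measure_mono_null hcover (measure_iUnion_null hnull))
  exact ⟨_, by positivity, fun h0 => hj (measure_mono_null (Set.subset_iUnion _ m) h0)⟩

lemma measure_iUnion_deepEntry_mul_add_le [Countable ι] [IsProbabilityMeasure P]
    (hX : ∀ i, Measurable (X i)) (hindep : iIndepFun X P)
    (hident : ∀ i, P.map (X i) = P.map (X 0)) (η t : ℝ) :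
    P (⋃ m, deepEntry X η m) * P (shifted X 0 ⁻¹' everAbove (t - η))
      + P (⋃ m, shallowEntry X η m) * P (shifted X 0 ⁻¹' everAbove t)
      ≤ P (shifted X 0 ⁻¹' everAbove t) := by
  have hdisj := disjoint_iUnion_deepEntry_shallowEntry (X := X) η
  rw [← measure_iUnion_inter_shifted_preimage hX hindep hident (F := deepEntry X η)
      (fun _ _ hmn => (disjoint_disjointed _ hmn).mono Set.inter_subset_left
        Set.inter_subset_left)
      (measurableSet_deepEntry_past η) (measurableSet_everAbove _),
    ← measure_iUnion_inter_shifted_preimage hX hindep hident (F := shallowEntry X η)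
      (fun _ _ hmn => (disjoint_disjointed _ hmn).mono Set.sdiff_subset Set.sdiff_subset)
      (measurableSet_shallowEntry_past η) (measurableSet_everAbove _),
    ← measure_union (hdisj.mono (Set.iUnion_mono fun _ => Set.inter_subset_left)
      (Set.iUnion_mono fun _ => Set.inter_subset_left))
      (.iUnion fun m => (past_le hX m _ (measurableSet_shallowEntry_past η m)).inter
        (measurable_shifted hX m (measurableSet_everAbove t)))]
  refine measure_mono (Set.union_subset (Set.iUnion_subset fun m ω hω => ?_)
    (Set.iUnion_subset fun m ω hω => ?_))
  · exact mem_everAbove_of_shift (fun i => (hω.1.2.2 i).le) hω.2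
  · exact mem_everAbove_of_shift (fun i => (walk_pos_of_mem_firstEntry hω.1.1 i).le)
      (by rw [sub_zero]; exact hω.2)

lemma measure_everAbove_eq_one [Finite ι] [IsProbabilityMeasure P]
    (hX : ∀ i, Measurable (X i)) (hindep : iIndepFun X P)
    (hident : ∀ i, P.map (X i) = P.map (X 0)) (hhit : P (shifted X 0 ⁻¹' everAbove 0) = 1)
    (t : ℝ) : P (shifted X 0 ⁻¹' everAbove t) = 1 := by
  have hentry : P (⋃ m, firstEntry X m) = 1 := by rwa [iUnion_firstEntry]
  obtain ⟨η, hη, hdeep⟩ := exists_measure_iUnion_deepEntry_ne_zero (hentry ▸ one_ne_zero)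
  have hstep : ∀ t, P (shifted X 0 ⁻¹' everAbove (t - η)) = 1 →
      P (shifted X 0 ⁻¹' everAbove t) = 1 := fun t ht =>
    ENNReal.eq_one_of_add_mul_le hdeep
      (by rw [measure_iUnion_deepEntry_add_shallowEntry hX, hentry]) prob_le_one
      (by simpa only [ht, mul_one] using
        measure_iUnion_deepEntry_mul_add_le hX hindep hident η t)
  have hmul : ∀ n : ℕ, P (shifted X 0 ⁻¹' everAbove (n * η)) = 1 := by
    intro n
    induction n with
    | zero => simpa using hhit
    | succ n ih => exact hstep _ (by rwa [Nat.cast_succ, add_one_mul, add_sub_cancel_right])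
  obtain ⟨n, hn⟩ := Archimedean.arch t hη
  rw [nsmul_eq_mul] at hn
  exact le_antisymm prob_le_one <|
    (hmul n).symm.le.trans (measure_mono (Set.preimage_mono (everAbove_anti hn)))

end Walk

end OrthantHitting

theorem stmt17_general {Ω : Type*} [MeasurableSpace Ω] (P : Measure Ω) [IsProbabilityMeasure P]
    {d : ℕ}
    (X : ℕ → Ω → (Fin d → ℝ)) (hmeas : ∀ i, Measurable (X i))
    (hindep : iIndepFun X P)
    (hident : ∀ i, P.map (X i) = P.map (X 0))
    (S : ℕ → Ω → (Fin d → ℝ)) (hS : ∀ n ω, S n ω = ∑ i ∈ Finset.range n, X i ω)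
    (hhit : P {ω | ∃ n, 1 ≤ n ∧ ∀ i, 0 < S n ω i} = 1) :
    ∀ x : Fin d → ℝ, P {ω | ∃ n, 1 ≤ n ∧ ∀ i, x i < S n ω i} = 1 := by
  have hS_everAbove : ∀ t, {ω | ∃ n, 1 ≤ n ∧ ∀ i, t < S n ω i} =
      OrthantHitting.shifted X 0 ⁻¹' OrthantHitting.everAbove t := fun t => by
    ext ω
    simp [OrthantHitting.everAbove, OrthantHitting.aboveAt, OrthantHitting.walk,
      OrthantHitting.shifted, hS]
  intro x
  obtain ⟨M, hM⟩ := Finite.exists_le x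
  have hM_hit :=
    OrthantHitting.measure_everAbove_eq_one hmeas hindep hident (hS_everAbove 0 ▸ hhit) M
  refine le_antisymm prob_le_one (hM_hit ▸ measure_mono ?_)
  rw [← hS_everAbove]
  exact fun ω ⟨n, hn, hω⟩ => ⟨n, hn, fun i => (hM i).trans_lt (hω i)⟩

/-- for a random walk in `ℝ^d` with i.i.d. increments started at `0`
that a.s. hits the open positive orthant, every shifted open orthant
`x + (0,∞)^d` is hit a.s. -/
theorem stmt17 {Ω : Type*} [MeasurableSpace Ω] (P : Measure Ω) [IsProbabilityMeasure P]
    {d : ℕ} (hd : 1 ≤ d)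
    (X : ℕ → Ω → (Fin d → ℝ)) (hmeas : ∀ i, Measurable (X i))
    (hindep : iIndepFun X P)
    (hident : ∀ i, P.map (X i) = P.map (X 0))
    (S : ℕ → Ω → (Fin d → ℝ)) (hS : ∀ n ω, S n ω = ∑ i ∈ Finset.range n, X i ω)
    (hhit : P {ω | ∃ n, 1 ≤ n ∧ ∀ i, 0 < S n ω i} = 1) :
    ∀ x : Fin d → ℝ, P {ω | ∃ n, 1 ≤ n ∧ ∀ i, x i < S n ω i} = 1 :=
  stmt17_general P X hmeas hindep hident S hS hhit
end
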